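/- arXiv:2107.12881 — 9 statements merged into one kernel-verified Lean document; each statement's English description precedes it below -/
import Mathlib

section
/- Let M₁, ..., M_{2n-1} be matchings, each of size n, in a bipartite graph G. Then there exists a matching of size n consisting of edges e₁, ..., eₙ together with distinct indices i₁, ..., iₙ ∈ [2n-1] such that e_j ∈ M_{i_j} for each j (a full-size rainbow matching). -/
/-!
Orienting every edge from colour class `0` to colour class `1` turns the matchings into sets of
pairs that are injective in both coordinates, so it suffices to treat bipartite matchings in
`α × β`. A rainbow matching `R` of size `k` is extended by an alternating-tree argument. With
`2k + 1` colours, `k + 1` of them are unused by `R`. The tree consists of edges `T ⊆ R` and at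
most `|T|` fresh colours `W` such that, for every `r ∈ T`, `R` can be rerouted into a rainbow
matching of the same size that uses only colours from `W` besides its own and leaves the right
endpoint of `r` uncovered. A fresh colour `u` has `k + 1 > |T| + |R \ T|` edges, so one of them,
`e`, avoids the left endpoints of `T` and the right endpoints of `R \ T`; its right endpoint can
then be uncovered by rerouting. If the left endpoint of `e` is not covered by `R`, adding `e` to
the rerouted matching augments it; otherwise it is covered by some `r ∉ T`, and `r` joins the
tree with colour `u`. The tree cannot outgrow `R`, so augmentation happens eventually.
-/

/-- `M` is a matching in `G`: a set of edges of `G` that are pairwise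
vertex-disjoint. -/
def IsMatchingIn {V : Type*} (G : SimpleGraph V) (M : Finset (Sym2 V)) : Prop :=
  ↑M ⊆ G.edgeSet ∧ ∀ e ∈ M, ∀ f ∈ M, e ≠ f → ∀ v, v ∈ e → v ∉ f

open Finset

namespace Rainbow

variable {ι α β : Type*}

def IsBipartiteMatching (M : Finset (α × β)) : Prop :=
  Set.InjOn Prod.fst (M : Set (α × β)) ∧ Set.InjOn Prod.snd (M : Set (α × β))

theorem IsBipartiteMatching.exists_fst_notMem_snd_notMem [DecidableEq α] [DecidableEq β]
    {M : Finset (α × β)} (hM : IsBipartiteMatching M) (A : Finset α) (B : Finset β)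
    (h : #A + #B < #M) :
    ∃ e ∈ M, e.1 ∉ A ∧ e.2 ∉ B := by
  have hA : #{e ∈ M | e.1 ∈ A} ≤ #A :=
    card_le_card_of_injOn Prod.fst (fun e he => (mem_filter.1 he).2)
      (hM.1.mono (coe_subset.2 (filter_subset _ _)))
  have hB : #{e ∈ M | e.2 ∈ B} ≤ #B :=
    card_le_card_of_injOn Prod.snd (fun e he => (mem_filter.1 he).2)
      (hM.2.mono (coe_subset.2 (filter_subset _ _)))
  obtain ⟨e, he, hbad⟩ := exists_mem_notMem_of_card_lt_card
    ((card_union_le _ _).trans_lt (by omega : #{e ∈ M | e.1 ∈ A} + #{e ∈ M | e.2 ∈ B} < #M))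
  simp only [mem_union, mem_filter, not_or, not_and] at hbad
  exact ⟨e, he, hbad.1 he, hbad.2 he⟩

variable (N : ι → Finset (α × β))

structure IsRainbowMatching (R : Finset (ι × α × β)) : Prop where
  mem : ∀ p ∈ R, p.2 ∈ N p.1
  injOn_color : Set.InjOn Prod.fst (R : Set (ι × α × β))
  injOn_left : Set.InjOn (fun p => p.2.1) (R : Set (ι × α × β))
  injOn_right : Set.InjOn (fun p => p.2.2) (R : Set (ι × α × β))

variable {N}

theorem IsRainbowMatching.empty : IsRainbowMatching N ∅ :=
  ⟨by simp, by simp, by simp, by simp⟩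

theorem IsRainbowMatching.mono {R S : Finset (ι × α × β)} (hR : IsRainbowMatching N R)
    (hS : S ⊆ R) : IsRainbowMatching N S :=
  ⟨fun p hp => hR.mem p (hS hp), hR.injOn_color.mono (coe_subset.2 hS),
    hR.injOn_left.mono (coe_subset.2 hS), hR.injOn_right.mono (coe_subset.2 hS)⟩

variable [DecidableEq ι] [DecidableEq α] [DecidableEq β]

abbrev colors (R : Finset (ι × α × β)) : Finset ι := R.image Prod.fst

abbrev lefts (R : Finset (ι × α × β)) : Finset α := R.image fun p => p.2.1

abbrev rights (R : Finset (ι × α × β)) : Finset β := R.image fun p => p.2.2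

theorem IsRainbowMatching.insert {R : Finset (ι × α × β)} (hR : IsRainbowMatching N R)
    {c : ι} {e : α × β} (he : e ∈ N c) (hc : c ∉ colors R) (hl : e.1 ∉ lefts R)
    (hr : e.2 ∉ rights R) : IsRainbowMatching N (insert (c, e) R) := by
  have hnot : (c, e) ∉ R := fun h => hc (mem_image_of_mem _ h)
  refine ⟨?_, ?_, ?_, ?_⟩
  · simpa only [forall_mem_insert] using ⟨he, hR.mem⟩
  · rw [coe_insert, Set.injOn_insert (mem_coe.not.2 hnot)]
    exact ⟨hR.injOn_color, fun ⟨p, hp, h⟩ => hc (mem_image.2 ⟨p, hp, h⟩)⟩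
  · rw [coe_insert, Set.injOn_insert (mem_coe.not.2 hnot)]
    exact ⟨hR.injOn_left, fun ⟨p, hp, h⟩ => hl (mem_image.2 ⟨p, hp, h⟩)⟩
  · rw [coe_insert, Set.injOn_insert (mem_coe.not.2 hnot)]
    exact ⟨hR.injOn_right, fun ⟨p, hp, h⟩ => hr (mem_image.2 ⟨p, hp, h⟩)⟩

variable (N) (R : Finset (ι × α × β))

/-- `B` is what `R` becomes after switching along alternating paths that remove only edges of `T`
and add only edges of the fresh colours `W`, so that the right vertex `y` is left uncovered. -/
structure IsRerouting (T : Finset (ι × α × β)) (W : Finset ι) (y : β)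
    (B : Finset (ι × α × β)) : Prop where
  isRainbowMatching : IsRainbowMatching N B
  card_eq : #B = #R
  sdiff_subset : R \ T ⊆ B
  lefts_subset : lefts B ⊆ lefts R
  colors_subset : colors B ⊆ colors R ∪ W
  notMem_rights : y ∉ rights B

variable {N R} {T : Finset (ι × α × β)} {W : Finset ι} {y : β} {B : Finset (ι × α × β)}

theorem IsRainbowMatching.isRerouting_self (hR : IsRainbowMatching N R) (hy : y ∉ rights R) :
    IsRerouting N R T W y R :=
  ⟨hR, rfl, sdiff_subset, subset_rfl, subset_union_left, hy⟩

theorem IsRerouting.mono (hB : IsRerouting N R T W y B) {T' : Finset (ι × α × β)}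
    {W' : Finset ι} (hT : T ⊆ T') (hW : W ⊆ W') : IsRerouting N R T' W' y B :=
  ⟨hB.isRainbowMatching, hB.card_eq, (sdiff_subset_sdiff subset_rfl hT).trans hB.sdiff_subset,
    hB.lefts_subset, hB.colors_subset.trans (union_subset_union subset_rfl hW), hB.notMem_rights⟩

theorem IsRerouting.augment (hB : IsRerouting N R T W y B) {u : ι} {e : α × β}
    (hu : u ∉ colors R ∪ W) (he : e ∈ N u) (hl : e.1 ∉ lefts R) (hy : e.2 = y) :
    IsRainbowMatching N (insert (u, e) B) ∧ #(insert (u, e) B) = #R + 1 := by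
  have hc : u ∉ colors B := fun h => hu (hB.colors_subset h)
  refine ⟨hB.isRainbowMatching.insert he hc (fun h => hl (hB.lefts_subset h))
    (hy ▸ hB.notMem_rights), ?_⟩
  rw [card_insert_of_notMem fun h => hc (mem_image_of_mem _ h), hB.card_eq]

theorem IsRerouting.swap (hB : IsRerouting N R T W y B) {r : ι × α × β} (hr : r ∈ R)
    (hrT : r ∉ T) {u : ι} {e : α × β} (hu : u ∉ colors R ∪ W) (he : e ∈ N u)
    (hl : e.1 = r.2.1) (hy : e.2 = y) :
    IsRerouting N R (insert r T) (insert u W) r.2.2 (insert (u, e) (B.erase r)) := by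
  have hrB : r ∈ B := hB.sdiff_subset (mem_sdiff.2 ⟨hr, hrT⟩)
  have hB' := hB.isRainbowMatching.mono (erase_subset r B)
  have hc : u ∉ colors (B.erase r) := fun h =>
    hu (hB.colors_subset (image_subset_image (erase_subset r B) h))
  have hl' : e.1 ∉ lefts (B.erase r) := fun h => by
    obtain ⟨p, hp, hpe⟩ := mem_image.1 h
    exact (mem_erase.1 hp).1
      (hB.isRainbowMatching.injOn_left (mem_erase.1 hp).2 hrB (hpe.trans hl))
  have hr' : e.2 ∉ rights (B.erase r) := fun h =>
    hB.notMem_rights (hy ▸ image_subset_image (erase_subset r B) h)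
  refine ⟨hB'.insert he hc hl' hr', ?_, ?_, ?_, ?_, ?_⟩
  · rw [card_insert_of_notMem fun h => hc (mem_image_of_mem _ h), card_erase_add_one hrB,
      hB.card_eq]
  · intro p hp
    obtain ⟨hpR, hpT⟩ := mem_sdiff.1 hp
    rw [mem_insert, not_or] at hpT
    exact mem_insert_of_mem
      (mem_erase.2 ⟨hpT.1, hB.sdiff_subset (mem_sdiff.2 ⟨hpR, hpT.2⟩)⟩)
  · rw [lefts, image_insert, insert_subset_iff]
    exact ⟨hl ▸ mem_image_of_mem _ hr,
      (image_subset_image (erase_subset r B)).trans hB.lefts_subset⟩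
  · rw [colors, image_insert, insert_subset_iff]
    exact ⟨mem_union_right _ (mem_insert_self u W),
      (image_subset_image (erase_subset r B)).trans
        (hB.colors_subset.trans (union_subset_union subset_rfl (subset_insert u W)))⟩
  · rw [rights, image_insert, mem_insert, not_or]
    refine ⟨fun h => hB.notMem_rights (hy ▸ h ▸ mem_image_of_mem _ hrB), fun h => ?_⟩
    obtain ⟨p, hp, hpr⟩ := mem_image.1 h
    exact (mem_erase.1 hp).1 (hB.isRainbowMatching.injOn_right (mem_erase.1 hp).2 hrB hpr)

variable (N R) in
structure IsAlternatingTree (T : Finset (ι × α × β)) (W : Finset ι) : Prop where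
  subset : T ⊆ R
  disjoint : Disjoint W (colors R)
  card_le : #W ≤ #T
  exists_isRerouting : ∀ r ∈ T, ∃ B, IsRerouting N R T W r.2.2 B

theorem isAlternatingTree_empty : IsAlternatingTree N R ∅ ∅ :=
  ⟨empty_subset R, disjoint_empty_left _, le_rfl, by simp⟩

theorem IsAlternatingTree.augment_or_grow [Fintype ι] (hR : IsRainbowMatching N R)
    (hι : 2 * #R < Fintype.card ι) (hN : ∀ i, IsBipartiteMatching (N i))
    (hNcard : ∀ i, #R < #(N i)) (hT : IsAlternatingTree N R T W) :
    (∃ R', IsRainbowMatching N R' ∧ #R' = #R + 1) ∨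
      ∃ T' W', IsAlternatingTree N R T' W' ∧ #T' = #T + 1 := by
  have hTR := card_le_card hT.subset
  obtain ⟨u, -, hu⟩ := exists_mem_notMem_of_card_lt_card (s := colors R ∪ W) (t := univ) <|
    calc #(colors R ∪ W) ≤ #R + #T :=
      (card_union_le _ _).trans (add_le_add card_image_le hT.card_le)
    _ < #(univ : Finset ι) := by rw [card_univ]; omega
  obtain ⟨e, he, hl, hr⟩ := (hN u).exists_fst_notMem_snd_notMem (lefts T) (rights (R \ T)) <|
    calc #(lefts T) + #(rights (R \ T)) ≤ #T + #(R \ T) := add_le_add card_image_le card_image_le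
    _ = #R := by rw [card_sdiff_of_subset hT.subset]; omega
    _ < #(N u) := hNcard u
  have hfree : ∃ B, IsRerouting N R T W e.2 B := by
    by_cases he2 : e.2 ∈ rights R
    · obtain ⟨r, hrR, hre⟩ := mem_image.1 he2
      have hrT : r ∈ T := by
        by_contra hrT
        exact hr (mem_image.2 ⟨r, mem_sdiff.2 ⟨hrR, hrT⟩, hre⟩)
      exact hre ▸ hT.exists_isRerouting r hrT
    · exact ⟨R, hR.isRerouting_self he2⟩
  obtain ⟨B, hB⟩ := hfree
  by_cases he1 : e.1 ∈ lefts R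
  · obtain ⟨r, hrR, hre⟩ := mem_image.1 he1
    have hrT : r ∉ T := fun h => hl (mem_image.2 ⟨r, h, hre⟩)
    refine .inr ⟨insert r T, insert u W, ⟨insert_subset hrR hT.subset, ?_, ?_, ?_⟩,
      card_insert_of_notMem hrT⟩
    · exact disjoint_insert_left.2 ⟨fun h => hu (mem_union_left _ h), hT.disjoint⟩
    · rw [card_insert_of_notMem hrT]
      exact (card_insert_le u W).trans (Nat.succ_le_succ hT.card_le)
    · rw [forall_mem_insert]
      exact ⟨⟨_, hB.swap hrR hrT hu he hre.symm rfl⟩, fun r' hr' =>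
        (hT.exists_isRerouting r' hr').imp fun _ hB' =>
          hB'.mono (subset_insert r T) (subset_insert u W)⟩
  · exact .inl ⟨_, hB.augment hu he he1 rfl⟩

theorem IsAlternatingTree.exists_isRainbowMatching_card_succ [Fintype ι]
    (hR : IsRainbowMatching N R) (hι : 2 * #R < Fintype.card ι)
    (hN : ∀ i, IsBipartiteMatching (N i)) (hNcard : ∀ i, #R < #(N i))
    {T : Finset (ι × α × β)} {W : Finset ι} (hT : IsAlternatingTree N R T W) :
    ∃ R', IsRainbowMatching N R' ∧ #R' = #R + 1 := by
  obtain h | ⟨T', W', hT', hcard⟩ := hT.augment_or_grow hR hι hN hNcard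
  · exact h
  · have := card_le_card hT'.subset
    exact hT'.exists_isRainbowMatching_card_succ hR hι hN hNcard
termination_by #R - #T

theorem exists_isRainbowMatching_card [Fintype ι] (hN : ∀ i, IsBipartiteMatching (N i)) :
    ∀ k, 2 * k ≤ Fintype.card ι + 1 → (∀ i, k ≤ #(N i)) →
      ∃ R, IsRainbowMatching N R ∧ #R = k
  | 0, _, _ => ⟨∅, .empty, rfl⟩
  | k + 1, hι, hk => by
    obtain ⟨R, hR, rfl⟩ :=
      exists_isRainbowMatching_card hN k (by omega) fun i => (hk i).trans' k.le_succ
    exact isAlternatingTree_empty.exists_isRainbowMatching_card_succ hR (by omega) hN hk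

end Rainbow

section Graph

variable {V : Type*} {G : SimpleGraph V}

namespace SimpleGraph.Coloring

variable (C : G.Coloring (Fin 2))

noncomputable def orient (e : Sym2 V) : V × V :=
  if C e.out.1 = 0 then e.out else e.out.swap

theorem mk_orient (e : Sym2 V) : s((C.orient e).1, (C.orient e).2) = e := by
  unfold orient
  split_ifs
  · exact e.out_eq
  · exact Sym2.eq_swap.trans e.out_eq

theorem orient_injective : Function.Injective C.orient :=
  Function.LeftInverse.injective C.mk_orient

theorem color_orient {e : Sym2 V} (he : e ∈ G.edgeSet) :
    C (C.orient e).1 = 0 ∧ C (C.orient e).2 ≠ 0 := by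
  have hadj : G.Adj e.out.1 e.out.2 := by rwa [← G.mem_edgeSet, Sym2.mk, e.out_eq]
  have hne := C.valid hadj
  unfold orient
  split_ifs with h
  · exact ⟨h, h ▸ hne.symm⟩
  · rw [Prod.fst_swap, Prod.snd_swap]
    exact ⟨by omega, h⟩

end SimpleGraph.Coloring

theorem IsMatchingIn.isBipartiteMatching_image [DecidableEq V] {M : Finset (Sym2 V)}
    (hM : IsMatchingIn G M) {f : Sym2 V → V × V} (hf : ∀ e ∈ M, s((f e).1, (f e).2) = e) :
    Rainbow.IsBipartiteMatching (M.image f) := by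
  have hfst : ∀ e ∈ M, (f e).1 ∈ e := fun e he => by
    simpa only [hf e he] using Sym2.mem_mk_left (f e).1 (f e).2
  have hsnd : ∀ e ∈ M, (f e).2 ∈ e := fun e he => by
    simpa only [hf e he] using Sym2.mem_mk_right (f e).1 (f e).2
  have hshared : ∀ e ∈ M, ∀ e' ∈ M, ∀ v ∈ e, v ∈ e' → f e = f e' :=
    fun e he e' he' v hv hv' => by
      by_contra hne
      exact hM.2 e he e' he' (fun h => hne (h ▸ rfl)) v hv hv'
  constructor
  all_goals
    intro p hp q hq hpq
    obtain ⟨e, he, rfl⟩ := mem_image.1 hp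
    obtain ⟨e', he', rfl⟩ := mem_image.1 hq
  · exact hshared e he e' he' _ (hfst e he) (hpq ▸ hfst e' he')
  · exact hshared e he e' he' _ (hsnd e he) (hpq ▸ hsnd e' he')

namespace Rainbow.IsRainbowMatching

variable {ι : Type*} {N : ι → Finset (V × V)} {R : Finset (ι × V × V)} {S : Set V}

theorem injOn_mk (hR : IsRainbowMatching N R)
    (hS : ∀ p ∈ R, p.2.1 ∈ S ∧ p.2.2 ∉ S) :
    Set.InjOn (fun p => s(p.2.1, p.2.2)) (R : Set (ι × V × V)) := by
  intro p hp q hq hpq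
  rcases Sym2.eq_iff.1 hpq with ⟨h, -⟩ | ⟨h, -⟩
  · exact hR.injOn_left hp hq h
  · exact absurd (h ▸ (hS p hp).1) (hS q hq).2

theorem isMatchingIn_image_mk [DecidableEq V] (hR : IsRainbowMatching N R)
    (hS : ∀ p ∈ R, p.2.1 ∈ S ∧ p.2.2 ∉ S) (hG : ∀ p ∈ R, G.Adj p.2.1 p.2.2) :
    IsMatchingIn G (R.image fun p => s(p.2.1, p.2.2)) := by
  refine ⟨fun e he => ?_, fun e he f hf hne v hve hvf => ?_⟩
  · obtain ⟨p, hp, rfl⟩ := mem_image.1 (mem_coe.1 he)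
    exact hG p hp
  obtain ⟨p, hp, rfl⟩ := mem_image.1 he
  obtain ⟨q, hq, rfl⟩ := mem_image.1 hf
  have hpq : p ≠ q := by rintro rfl; exact hne rfl
  rcases Sym2.mem_iff.1 hve with rfl | rfl <;> rcases Sym2.mem_iff.1 hvf with h | h
  · exact hpq (hR.injOn_left hp hq h)
  · exact (hS q hq).2 (h ▸ (hS p hp).1)
  · exact (hS p hp).2 (h ▸ (hS q hq).1)
  · exact hpq (hR.injOn_right hp hq h)

end Rainbow.IsRainbowMatching

end Graph

/-- Drisko's theorem: `2n-1` matchings of size `n` in a bipartite graph have a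
full rainbow matching of size `n`. -/
theorem drisko {V : Type*} [DecidableEq V] {G : SimpleGraph V}
    (hbip : G.Colorable 2) {n : ℕ}
    (M : Fin (2 * n - 1) → Finset (Sym2 V))
    (hM : ∀ i, IsMatchingIn G (M i)) (hcard : ∀ i, (M i).card = n) :
    ∃ (e : Fin n → Sym2 V) (idx : Fin n → Fin (2 * n - 1)),
      Function.Injective e ∧ Function.Injective idx ∧
      (∀ j, e j ∈ M (idx j)) ∧
      IsMatchingIn G (Finset.univ.image e) := by
  obtain ⟨C⟩ := hbip
  obtain ⟨R, hR, hRcard⟩ :=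
    Rainbow.exists_isRainbowMatching_card (N := fun i => (M i).image C.orient)
    (fun i => (hM i).isBipartiteMatching_image fun e _ => C.mk_orient e) n (by simp; omega)
    (fun i => by rw [card_image_of_injective _ C.orient_injective, hcard i])
  have hRM : ∀ p ∈ R, s(p.2.1, p.2.2) ∈ M p.1 ∧ C p.2.1 = 0 ∧ C p.2.2 ≠ 0 := by
    intro p hp
    obtain ⟨e, he, hpe⟩ := mem_image.1 (hR.mem p hp)
    rw [← hpe, C.mk_orient]
    exact ⟨he, C.color_orient ((hM p.1).1 he)⟩
  have hS : ∀ p ∈ R, p.2.1 ∈ {v | C v = 0} ∧ p.2.2 ∉ {v | C v = 0} :=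
    fun p hp => (hRM p hp).2
  have hG : ∀ p ∈ R, G.Adj p.2.1 p.2.2 := fun p hp => (hM p.1).1 (hRM p hp).1
  let q := (R.equivFinOfCardEq hRcard).symm
  refine ⟨fun j => s((q j).1.2.1, (q j).1.2.2), fun j => (q j).1.1,
    (hR.injOn_mk hS).injective.comp q.injective, hR.injOn_color.injective.comp q.injective,
    fun j => (hRM _ (q j).2).1, ?_⟩
  convert hR.isMatchingIn_image_mk hS hG using 1
  ext e
  simp only [mem_image, mem_univ, true_and]
  exact ⟨fun ⟨j, hj⟩ => ⟨_, (q j).2, hj⟩,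
    fun ⟨p, hp, hpe⟩ => ⟨q.symm ⟨p, hp⟩, by rwa [q.apply_symm_apply]⟩⟩
end

section
/- There exist three matchings M₁, M₂, M₃, each of size 4, in a graph on 8 vertices, such that no matching of size 3 can be formed by choosing one edge from each of the three matchings (one edge per matching, all three edges pairwise disjoint). -/
private def M1 : Finset (Sym2 (Fin 8)) := {s(0,1), s(2,3), s(4,5), s(6,7)}
private def M2 : Finset (Sym2 (Fin 8)) := {s(0,2), s(1,3), s(4,6), s(5,7)}
private def M3 : Finset (Sym2 (Fin 8)) := {s(0,3), s(1,2), s(4,7), s(5,6)}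

/-- There are three matchings of size `4` in a graph on `8` vertices with no
rainbow matching of size `3` (one pairwise-disjoint edge from each matching). -/
theorem no_rainbow_matching_of_three :
    ∃ (G : SimpleGraph (Fin 8)) (M : Fin 3 → Finset (Sym2 (Fin 8))),
      (∀ i, IsMatchingIn G (M i) ∧ (M i).card = 4) ∧
      ¬ ∃ e : Fin 3 → Sym2 (Fin 8),
          (∀ i, e i ∈ M i) ∧
          (∀ i j, i ≠ j → ∀ v, v ∈ e i → v ∉ e j) := by
  refine ⟨SimpleGraph.fromEdgeSet ↑(M1 ∪ M2 ∪ M3), ![M1, M2, M3], ?_, ?_⟩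
  · intro i
    refine ⟨⟨?_, ?_⟩, ?_⟩
    · intro e he
      rw [SimpleGraph.edgeSet_fromEdgeSet]
      simp only [Finset.mem_coe] at he ⊢
      revert he
      fin_cases i <;> simp only [Matrix.cons_val_zero, Matrix.cons_val_one, Matrix.head_cons] <;>
        revert e <;> decide
    · fin_cases i <;> decide
    · fin_cases i <;> decide
  · rintro ⟨e, he, hd⟩
    have h0 := he 0
    have h1 := he 1
    have h2 := he 2
    simp only [Matrix.cons_val_zero, Matrix.cons_val_one, Matrix.head_cons] at h0 h1 h2
    have key : ∀ a ∈ M1, ∀ b ∈ M2, ∀ c ∈ M3,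
        ¬((∀ v, v ∈ a → v ∉ b) ∧ (∀ v, v ∈ a → v ∉ c) ∧ (∀ v, v ∈ b → v ∉ c)) := by decide
    exact key _ h0 _ h1 _ h2 ⟨hd 0 1 (by decide), hd 0 2 (by decide), hd 1 2 (by decide)⟩
end

section
/- Let D be a directed graph with distinguished vertices s, t, with no edges into s and no edges out of t, and with |V(D) \ {s,t}| = n. Let P₁, ..., P_{n+1} be directed s–t paths in D. Then there exists a directed s–t path in D each of whose edges can be injectively assigned to distinct indices i with the edge belonging to Pᵢ (a rainbow s–t path). -/
/-- The list of (directed) edges of a path given as a list of vertices. -/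
def pathEdges {V : Type*} (l : List V) : List (V × V) := l.zip l.tail

/-- `l` is a directed `s`–`t` path in the digraph `D`: a list of distinct
vertices starting at `s`, ending at `t`, with consecutive vertices joined by
edges of `D`. -/
def IsSTPath {V : Type*} (D : V → V → Prop) (s t : V) (l : List V) : Prop :=
  l.Chain' D ∧ l.head? = some s ∧ l.getLast? = some t ∧ l.Nodup


/-!
Colour the paths by `Fin (n + 1)` and let `R C` be the set of vertices from which a rainbow path
with colours in `C` leads to `t`; it always contains `t`. Adding a fresh colour `i` while
`s ∉ R (C ∪ {i})`: the path `P i` starts at `s ∉ R C` and ends at `t ∈ R C`, so one of its edges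
`(x, y)` enters `R C`. A rainbow `y`–`t` path lies inside `R C`, hence avoids `x`, and prepending
`(x, y)` with colour `i` puts `x` into `R (C ∪ {i})`. So each colour enlarges `R`, and if `s` were
never reached, `R` would have at least `n + 2` elements inside `V \ {s}`, which has at most `n + 1`.
-/

namespace List

variable {V : Type*}

lemma IsChain.rel_of_mem_pathEdges {R : V → V → Prop} :
    ∀ {l : List V}, l.IsChain R → ∀ e ∈ pathEdges l, R e.1 e.2
  | [], _, _, he | [_], _, _, he => by simp [pathEdges] at he
  | x :: y :: l, h, e, he => by
    rw [isChain_cons_cons] at h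
    rcases List.mem_cons.mp he with rfl | he
    · exact h.1
    · exact h.2.rel_of_mem_pathEdges e he

lemma exists_mem_pathEdges_crossing (S : Set V) {b : V} (hb : b ∈ S) :
    ∀ (a : V) (l : List V), a ∉ S → (a :: l).getLast? = some b →
      ∃ e ∈ pathEdges (a :: l), e.1 ∉ S ∧ e.2 ∈ S
  | a, [], ha, hl => by simp_all
  | a, c :: l, ha, hl => by
    by_cases hc : c ∈ S
    · exact ⟨(a, c), List.mem_cons_self, ha, hc⟩
    · rw [getLast?_cons_cons] at hl
      obtain ⟨e, he, hS⟩ := exists_mem_pathEdges_crossing S hb c l hc hl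
      exact ⟨e, List.mem_cons_of_mem _ he, hS⟩

end List

section Rainbow

variable {V ι : Type*} {D : V → V → Prop} {P : ι → List V} {C C' : Set ι} {s t x y : V}
  {Q : List V}

lemma IsSTPath.exists_eq_cons {l : List V} (h : IsSTPath D s t l) : ∃ l', l = s :: l' := by
  obtain ⟨_, hs, -⟩ := h
  cases l with
  | nil => simp at hs
  | cons a l => exact ⟨l, by simpa using hs⟩

lemma IsSTPath.singleton (D : V → V → Prop) (v : V) : IsSTPath D v v [v] :=
  ⟨List.isChain_singleton v, rfl, rfl, List.nodup_singleton v⟩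

lemma IsSTPath.of_cons_cons (h : IsSTPath D x t (x :: y :: Q)) : IsSTPath D y t (y :: Q) := by
  obtain ⟨hc, -, hl, hn⟩ := h
  exact ⟨(List.isChain_cons_cons.mp hc).2, rfl, by rwa [List.getLast?_cons_cons] at hl,
    (List.nodup_cons.mp hn).2⟩

lemma IsSTPath.cons (h : IsSTPath D y t (y :: Q)) (hxy : D x y) (hx : x ∉ y :: Q) :
    IsSTPath D x t (x :: y :: Q) := by
  obtain ⟨hc, -, hl, hn⟩ := h
  exact ⟨List.isChain_cons_cons.mpr ⟨hxy, hc⟩, rfl, by rwa [List.getLast?_cons_cons],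
    List.nodup_cons.mpr ⟨hx, hn⟩⟩

def IsRainbow (P : ι → List V) (C : Set ι) (Q : List V) : Prop :=
  ∃ c : V × V → ι, Set.InjOn c {e | e ∈ pathEdges Q} ∧
    ∀ e ∈ pathEdges Q, c e ∈ C ∧ e ∈ pathEdges (P (c e))

lemma isRainbow_singleton [Nonempty ι] (P : ι → List V) (C : Set ι) (v : V) :
    IsRainbow P C [v] :=
  ⟨fun _ => Classical.arbitrary ι, by simp [pathEdges], by simp [pathEdges]⟩

lemma IsRainbow.mono (h : IsRainbow P C Q) (hC : C ⊆ C') : IsRainbow P C' Q := by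
  obtain ⟨c, hinj, hc⟩ := h
  exact ⟨c, hinj, fun e he => ⟨hC (hc e he).1, (hc e he).2⟩⟩

lemma IsRainbow.of_cons_cons (h : IsRainbow P C (x :: y :: Q)) : IsRainbow P C (y :: Q) := by
  obtain ⟨c, hinj, hc⟩ := h
  exact ⟨c, hinj.mono fun e he => List.mem_cons_of_mem _ he,
    fun e he => hc e (List.mem_cons_of_mem _ he)⟩

lemma IsRainbow.cons {i : ι} (h : IsRainbow P C (y :: Q)) (hi : i ∉ C)
    (hxy : (x, y) ∈ pathEdges (P i)) (hx : x ∉ y :: Q) :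
    IsRainbow P (insert i C) (x :: y :: Q) := by
  classical
  obtain ⟨c, hinj, hc⟩ := h
  have hnew : (x, y) ∉ {e | e ∈ pathEdges (y :: Q)} := fun he =>
    hx (List.of_mem_zip he).1
  have hcolour : Set.EqOn (Function.update c (x, y) i) c {e | e ∈ pathEdges (y :: Q)} :=
    fun e he => Function.update_of_ne (ne_of_mem_of_not_mem he hnew) i c
  refine ⟨Function.update c (x, y) i, ?_, ?_⟩
  · have hedges : {e | e ∈ pathEdges (x :: y :: Q)} = insert (x, y) {e | e ∈ pathEdges (y :: Q)} :=
      Set.ext fun e => List.mem_cons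
    rw [hedges, Set.injOn_insert hnew, Function.update_self, hcolour.injOn_iff, hcolour.image_eq]
    exact ⟨hinj, fun ⟨e, he, hce⟩ => hi (hce ▸ (hc e he).1)⟩
  · intro e he
    rcases List.mem_cons.mp he with rfl | he
    · simpa using hxy
    · rw [hcolour he]
      exact ⟨Set.mem_insert_of_mem i (hc e he).1, (hc e he).2⟩

variable (D P t) in
def rainbowReachableTo (C : Set ι) : Set V :=
  {v | ∃ Q, IsSTPath D v t Q ∧ IsRainbow P C Q}

lemma target_mem_rainbowReachableTo [Nonempty ι] : t ∈ rainbowReachableTo D P t C :=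
  ⟨[t], IsSTPath.singleton D t, isRainbow_singleton P C t⟩

lemma rainbowReachableTo_mono (hC : C ⊆ C') :
    rainbowReachableTo D P t C ⊆ rainbowReachableTo D P t C' :=
  fun _ ⟨Q, hQ, hR⟩ => ⟨Q, hQ, hR.mono hC⟩

lemma mem_rainbowReachableTo_of_mem :
    ∀ {v : V} {Q : List V}, IsSTPath D v t Q → IsRainbow P C Q →
      ∀ w ∈ Q, w ∈ rainbowReachableTo D P t C
  | _, [], _, _, w, hw => by simp at hw
  | v, y :: Q, hQ, hR, w, hw => by
    obtain ⟨_, hcons⟩ := hQ.exists_eq_cons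
    obtain ⟨rfl, -⟩ := List.cons.inj hcons
    rcases List.mem_cons.mp hw with rfl | hw
    · exact ⟨_, hQ, hR⟩
    · cases Q with
      | nil => simp at hw
      | cons z Q => exact mem_rainbowReachableTo_of_mem hQ.of_cons_cons hR.of_cons_cons w hw

lemma rainbowReachableTo_ssubset_insert [Nonempty ι] {i : ι} (hi : i ∉ C)
    (hP : IsSTPath D s t (P i)) (hs : s ∉ rainbowReachableTo D P t (insert i C)) :
    rainbowReachableTo D P t C ⊂ rainbowReachableTo D P t (insert i C) := by
  have hsub := rainbowReachableTo_mono (D := D) (P := P) (t := t) (Set.subset_insert i C)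
  obtain ⟨l, hl⟩ := hP.exists_eq_cons
  obtain ⟨hchain, -, hlast, -⟩ := hP
  obtain ⟨⟨x, y⟩, hxy, hx, hy⟩ := List.exists_mem_pathEdges_crossing _
    target_mem_rainbowReachableTo s l (fun h => hs (hsub h)) (hl ▸ hlast)
  rw [← hl] at hxy
  obtain ⟨Q, hQ, hR⟩ := hy
  obtain ⟨Q, rfl⟩ := hQ.exists_eq_cons
  have hxQ : x ∉ y :: Q := fun h => hx (mem_rainbowReachableTo_of_mem hQ hR x h)
  refine (Set.ssubset_iff_of_subset hsub).mpr ⟨x, ⟨x :: y :: Q, ?_, hR.cons hi hxy hxQ⟩, hx⟩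
  exact hQ.cons (hchain.rel_of_mem_pathEdges _ hxy) hxQ

lemma card_add_one_le_ncard_rainbowReachableTo [Nonempty ι] [Finite V] (C : Finset ι)
    (hP : ∀ i ∈ C, IsSTPath D s t (P i)) (hs : s ∉ rainbowReachableTo D P t C) :
    C.card + 1 ≤ (rainbowReachableTo D P t C).ncard := by
  classical
  induction C using Finset.induction_on with
  | empty => exact (Set.ncard_pos).mpr ⟨t, target_mem_rainbowReachableTo⟩
  | insert i C hi ih =>
    rw [Finset.coe_insert] at hs ⊢
    have hlt := Set.ncard_lt_ncard (rainbowReachableTo_ssubset_insert (Finset.mem_coe.not.mpr hi)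
      (hP i (Finset.mem_insert_self i C)) hs)
    have hC := ih (fun j hj => hP j (Finset.mem_insert_of_mem hj))
      (fun h => hs (rainbowReachableTo_mono (Set.subset_insert _ _) h))
    rw [Finset.card_insert_of_notMem hi]
    omega

end Rainbow

theorem rainbow_path_general {V : Type*} [Fintype V] (D : V → V → Prop) (s t : V) {n : ℕ}
    (hn : ({v : V | v ≠ s ∧ v ≠ t}).ncard = n)
    (P : Fin (n + 1) → List V) (hP : ∀ i, IsSTPath D s t (P i)) :
    ∃ Q : List V, IsSTPath D s t Q ∧
      ∃ c : V × V → Fin (n + 1),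
        Set.InjOn c {e | e ∈ pathEdges Q} ∧
        ∀ e ∈ pathEdges Q, e ∈ pathEdges (P (c e)) := by
  suffices hs : s ∈ rainbowReachableTo D P t (Finset.univ : Finset (Fin (n + 1))) by
    obtain ⟨Q, hQ, c, hinj, hc⟩ := hs
    exact ⟨Q, hQ, c, hinj, fun e he => (hc e he).2⟩
  by_contra hs
  have hreach := card_add_one_le_ncard_rainbowReachableTo Finset.univ (fun i _ => hP i) hs
  have hbound : (rainbowReachableTo D P t (Finset.univ : Finset (Fin (n + 1)))).ncard ≤ n + 1 :=
    calc _ ≤ (insert t {v : V | v ≠ s ∧ v ≠ t}).ncard :=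
          Set.ncard_le_ncard fun v hv => by
            by_cases hvt : v = t
            · exact Or.inl hvt
            · exact Or.inr ⟨fun hvs => hs (hvs ▸ hv), hvt⟩
      _ ≤ n + 1 := hn ▸ Set.ncard_insert_le _ _
  simp only [Finset.card_univ, Fintype.card_fin] at hreach
  omega

/-- In a network with `n` inner vertices, any `n+1` directed `s`–`t` paths have
a rainbow `s`–`t` path. -/
theorem rainbow_path {V : Type*} [Fintype V] (D : V → V → Prop) (s t : V)
    (hs : ∀ v, ¬ D v s) (ht : ∀ v, ¬ D t v) {n : ℕ}
    (hn : ({v : V | v ≠ s ∧ v ≠ t}).ncard = n)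
    (P : Fin (n + 1) → List V) (hP : ∀ i, IsSTPath D s t (P i)) :
    ∃ Q : List V, IsSTPath D s t Q ∧
      ∃ c : V × V → Fin (n + 1),
        Set.InjOn c {e | e ∈ pathEdges Q} ∧
        ∀ e ∈ pathEdges Q, e ∈ pathEdges (P (c e)) :=
  rainbow_path_general D s t hn P hP
end

section
/- Let D be a directed graph with source s and target t, |V(D) \ {s,t}| = n. Then any collection of n+1 directed s–t paths each of length at most k has a rainbow s–t path of length at most k. -/
/-!
Grow a set `X ∋ s` of vertices, each reached from `s` by a rainbow path inside `X`, by one vertex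
and one new colour at a time, as in Dijkstra's algorithm: among the paths `P i` of unused colour,
take the earliest position at which one of them leaves `X`, and extend the rainbow path to the
vertex before it by that edge. Taking the earliest exit preserves the invariant that the rainbow
path to `v` is no longer than the position of `v` on any path of unused colour. There are more
colours than inner vertices, so a colour stays unused while `t ∉ X`; hence `t` is reached, by a
path no longer than the path `P i` whose colour was used last.
-/

section

variable {V ι : Type*}

lemma mem_pathEdges_iff {l : List V} {e : V × V} :
    e ∈ pathEdges l ↔ ∃ i, l[i]? = some e.1 ∧ l[i + 1]? = some e.2 := by
  simp only [pathEdges, List.mem_iff_getElem?, List.getElem?_zip_eq_some, List.getElem?_tail]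

lemma length_pathEdges (l : List V) : (pathEdges l).length = l.length - 1 := by
  simp [pathEdges]

lemma pathEdges_concat {l : List V} {x : V} (hx : l.getLast? = some x) (y : V) :
    pathEdges (l ++ [y]) = pathEdges l ++ [(x, y)] := by
  induction l with
  | nil => simp at hx
  | cons a l ih =>
    cases l with
    | nil => simp_all [pathEdges]
    | cons b l =>
      simp only [List.getLast?_cons_cons] at hx
      simp_all [pathEdges]

lemma snd_mem_of_mem_pathEdges {l : List V} {e : V × V} (he : e ∈ pathEdges l) : e.2 ∈ l := by
  obtain ⟨i, -, hi⟩ := mem_pathEdges_iff.1 he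
  exact List.mem_of_getElem? hi

lemma rel_of_mem_pathEdges {R : V → V → Prop} {l : List V} (hl : l.IsChain R) {e : V × V}
    (he : e ∈ pathEdges l) : R e.1 e.2 := by
  obtain ⟨a, b⟩ := e
  obtain ⟨i, h₁, h₂⟩ := mem_pathEdges_iff.1 he
  obtain ⟨hi, rfl⟩ := List.getElem?_eq_some_iff.1 h₂
  obtain ⟨-, rfl⟩ := List.getElem?_eq_some_iff.1 h₁
  exact List.isChain_iff_getElem.1 hl i hi

lemma isSTPath_singleton (D : V → V → Prop) (s : V) : IsSTPath D s s [s] :=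
  ⟨List.isChain_singleton s, rfl, rfl, List.nodup_singleton s⟩

lemma IsSTPath.concat {D : V → V → Prop} {s x y : V} {Q : List V} (hQ : IsSTPath D s x Q)
    (hxy : D x y) (hy : y ∉ Q) : IsSTPath D s y (Q ++ [y]) := by
  obtain ⟨hchain, hhead, hlast, hnodup⟩ := hQ
  refine ⟨List.isChain_append.2 ⟨hchain, List.isChain_singleton y, ?_⟩, ?_,
    List.getLast?_concat, List.nodup_append.2 ⟨hnodup, List.nodup_singleton y, ?_⟩⟩
  · simp_all
  · simp [List.head?_append, hhead]
  · rintro a ha b hb rfl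
    exact hy (by simpa [List.mem_singleton.1 hb] using ha)

def IsRainbowColoring (P : ι → List V) (Q : List V) (c : V × V → ι) : Prop :=
  Set.InjOn c {e | e ∈ pathEdges Q} ∧ ∀ e ∈ pathEdges Q, e ∈ pathEdges (P (c e))

def IsRainbowPathIn (D : V → V → Prop) (P : ι → List V) (s v : V) (X : Finset V)
    (U : Finset ι) (Q : List V) : Prop :=
  IsSTPath D s v Q ∧ (∀ w ∈ Q, w ∈ X) ∧
    ∃ c, IsRainbowColoring P Q c ∧ ∀ e ∈ pathEdges Q, c e ∈ U

section RainbowPathIn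

variable {D : V → V → Prop} {P : ι → List V} {s v : V} {X X' : Finset V} {U U' : Finset ι}
  {Q : List V}

lemma isRainbowPathIn_singleton [Nonempty ι] (hs : s ∈ X) : IsRainbowPathIn D P s s X U [s] :=
  ⟨isSTPath_singleton D s, by simpa using hs, fun _ => Classical.arbitrary ι,
    ⟨by simp [pathEdges], by simp [pathEdges]⟩, by simp [pathEdges]⟩

lemma IsRainbowPathIn.mono (h : IsRainbowPathIn D P s v X U Q) (hX : X ⊆ X') (hU : U ⊆ U') :
    IsRainbowPathIn D P s v X' U' Q :=
  ⟨h.1, fun w hw => hX (h.2.1 w hw), h.2.2.imp fun _ hc => ⟨hc.1, fun e he => hU (hc.2 e he)⟩⟩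

lemma IsRainbowPathIn.concat [DecidableEq V] [DecidableEq ι] {x y : V} {i : ι}
    (h : IsRainbowPathIn D P s x X U Q) (hy : y ∉ X) (hi : i ∉ U)
    (hxy : (x, y) ∈ pathEdges (P i)) (hD : D x y) :
    IsRainbowPathIn D P s y (insert y X) (insert i U) (Q ++ [y]) := by
  obtain ⟨hQ, hQX, c, hc, hcU⟩ := h
  have hyQ : y ∉ Q := fun h => hy (hQX y h)
  have hnew : (x, y) ∉ pathEdges Q := fun h => hyQ (snd_mem_of_mem_pathEdges h)
  have hedges : ∀ e, e ∈ pathEdges (Q ++ [y]) ↔ e = (x, y) ∨ e ∈ pathEdges Q := by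
    simp [pathEdges_concat hQ.2.2.1, or_comm]
  have hold : Set.EqOn (Function.update c (x, y) i) c {e | e ∈ pathEdges Q} :=
    fun e he => Function.update_of_ne (ne_of_mem_of_not_mem he hnew) _ _
  refine ⟨hQ.concat hD hyQ, ?_, Function.update c (x, y) i, ⟨?_, ?_⟩, ?_⟩
  · intro w hw
    rcases List.mem_append.1 hw with hw | hw
    · exact Finset.mem_insert_of_mem (hQX w hw)
    · rw [List.mem_singleton.1 hw]; exact Finset.mem_insert_self y X
  · rw [show {e | e ∈ pathEdges (Q ++ [y])} = insert (x, y) {e | e ∈ pathEdges Q} by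
      ext; exact hedges _, Set.injOn_insert (s := {e | e ∈ pathEdges Q}) hnew]
    refine ⟨hc.1.congr hold.symm, ?_⟩
    rintro ⟨e, he, hce⟩
    rw [hold he, Function.update_self] at hce
    exact hi (hce ▸ hcU e he)
  · intro e he
    rcases (hedges e).1 he with rfl | he
    · rwa [Function.update_self]
    · rw [hold he]; exact hc.2 e he
  · intro e he
    rcases (hedges e).1 he with rfl | he
    · simp
    · rw [hold he]; exact Finset.mem_insert_of_mem (hcU e he)

end RainbowPathIn

lemma exists_first_exit (L : ι → List V) (J : Set ι) (X : Set V)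
    (hstart : ∀ j ∈ J, ∀ v, (L j)[0]? = some v → v ∈ X)
    (hleave : ∃ j ∈ J, ∃ v ∈ L j, v ∉ X) :
    ∃ j ∈ J, ∃ q x y, (L j)[q]? = some x ∧ x ∈ X ∧ (L j)[q + 1]? = some y ∧ y ∉ X ∧
      ∀ j' ∈ J, ∀ r, ∀ z ∉ X, (L j')[r]? = some z → q + 1 ≤ r := by
  classical
  have hex : ∃ r : ℕ, ∃ j ∈ J, ∃ z ∉ X, (L j)[r]? = some z := by
    obtain ⟨j, hj, v, hv, hvX⟩ := hleave
    obtain ⟨r, hr⟩ := List.mem_iff_getElem?.1 hv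
    exact ⟨r, j, hj, v, hvX, hr⟩
  obtain ⟨j, hj, y, hyX, hy⟩ := Nat.find_spec hex
  obtain ⟨q, hq⟩ : ∃ q, Nat.find hex = q + 1 :=
    Nat.exists_eq_succ_of_ne_zero fun h0 => hyX (hstart j hj y (h0 ▸ hy))
  rw [hq] at hy
  have hqlt : q < (L j).length := by
    have := (List.getElem?_eq_some_iff.1 hy).1
    omega
  have hxX : (L j)[q] ∈ X := by
    by_contra hxX
    exact Nat.find_min hex (by omega) ⟨j, hj, _, hxX, List.getElem?_eq_getElem hqlt⟩
  exact ⟨j, hj, q, _, y, List.getElem?_eq_getElem hqlt, hxX, hy, hyX,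
    fun j' hj' r z hz hr => hq ▸ Nat.find_min' hex ⟨j', hj', z, hz, hr⟩⟩

structure RainbowReach (D : V → V → Prop) (P : ι → List V) (s : V) (X : Finset V)
    (U : Finset ι) : Prop where
  source_mem : s ∈ X
  card_lt : U.card < X.card
  /- `q` is the position of `v` on `P i`, i.e. the number of edges of `P i` before `v`. -/
  exists_path : ∀ v ∈ X, ∃ Q, IsRainbowPathIn D P s v X U Q ∧
    ∀ i ∉ U, ∀ q, (P i)[q]? = some v → (pathEdges Q).length ≤ q

namespace RainbowReach

variable {D : V → V → Prop} {P : ι → List V} {s t : V} {X : Finset V} {U : Finset ι}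

lemma singleton [Nonempty ι] : RainbowReach D P s {s} ∅ where
  source_mem := Finset.mem_singleton_self s
  card_lt := by simp
  exists_path v hv := by
    rw [Finset.mem_singleton.1 hv]
    exact ⟨[s], isRainbowPathIn_singleton (Finset.mem_singleton_self s), by simp [pathEdges]⟩

lemma exists_notMem [Fintype V] [Fintype ι] (h : RainbowReach D P s X U) (ht : t ∉ X)
    (hι : {v | v ≠ s ∧ v ≠ t}.ncard < Fintype.card ι) : ∃ i, i ∉ U := by
  have hX : X.card ≤ {v | v ≠ s ∧ v ≠ t}.ncard + 1 := by
    rw [← Set.ncard_coe_finset]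
    refine (Set.ncard_le_ncard fun v hv => ?_).trans (Set.ncard_insert_le s _)
    by_cases hvs : v = s
    · exact Or.inl hvs
    · exact Or.inr ⟨hvs, fun hvt => ht (hvt ▸ hv)⟩
  obtain ⟨i, -, hi⟩ := Finset.exists_mem_notMem_of_card_lt_card (s := U) (t := Finset.univ)
    (by rw [Finset.card_univ]; have := h.card_lt; omega)
  exact ⟨i, hi⟩

lemma exists_extension [DecidableEq V] [DecidableEq ι] (h : RainbowReach D P s X U)
    (hP : ∀ i, IsSTPath D s t (P i)) (ht : t ∉ X) (hfree : ∃ i, i ∉ U) :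
    ∃ i ∉ U, ∃ y ∉ X, ∃ Q, IsRainbowPathIn D P s y (insert y X) (insert i U) Q ∧
      ∀ j ∉ U, ∀ r, (P j)[r]? = some y → (pathEdges Q).length ≤ r := by
  have hstart : ∀ i ∉ U, ∀ v, (P i)[0]? = some v → v ∈ X := by
    intro i _ v hv
    rw [← List.head?_eq_getElem?, (hP i).2.1, Option.some.injEq] at hv
    exact hv ▸ h.source_mem
  have hleave : ∃ i ∉ U, ∃ v ∈ P i, v ∉ X := by
    obtain ⟨i, hi⟩ := hfree
    exact ⟨i, hi, t, List.mem_of_getLast? (hP i).2.2.1, ht⟩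
  obtain ⟨i, hi, q, x, y, hx, hxX, hy, hyX, hmin⟩ :=
    exists_first_exit P {i | i ∉ U} X hstart hleave
  obtain ⟨Q, hQ, hlen⟩ := h.exists_path x hxX
  have hxy : (x, y) ∈ pathEdges (P i) := mem_pathEdges_iff.2 ⟨q, hx, hy⟩
  refine ⟨i, hi, y, hyX, Q ++ [y],
    hQ.concat hyX hi hxy (rel_of_mem_pathEdges (hP i).1 hxy), fun j hj r hr => ?_⟩
  rw [pathEdges_concat hQ.1.2.2.1, List.length_append, List.length_singleton]
  exact (Nat.add_le_add_right (hlen i hi q hx) 1).trans (hmin j hj r y hyX hr)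

lemma extend [DecidableEq V] [DecidableEq ι] (h : RainbowReach D P s X U) {y : V} {i : ι}
    {Q : List V} (hy : y ∉ X) (hi : i ∉ U)
    (hQ : IsRainbowPathIn D P s y (insert y X) (insert i U) Q)
    (hlen : ∀ j ∉ U, ∀ r, (P j)[r]? = some y → (pathEdges Q).length ≤ r) :
    RainbowReach D P s (insert y X) (insert i U) where
  source_mem := Finset.mem_insert_of_mem h.source_mem
  card_lt := by
    rw [Finset.card_insert_of_notMem hy, Finset.card_insert_of_notMem hi]
    exact Nat.add_lt_add_right h.card_lt 1
  exists_path v hv := by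
    rcases Finset.mem_insert.1 hv with rfl | hv
    · exact ⟨Q, hQ, fun j hj => hlen j fun hjU => hj (Finset.mem_insert_of_mem hjU)⟩
    · obtain ⟨Q', hQ', hlen'⟩ := h.exists_path v hv
      exact ⟨Q', hQ'.mono (Finset.subset_insert _ _) (Finset.subset_insert _ _),
        fun j hj => hlen' j fun hjU => hj (Finset.mem_insert_of_mem hjU)⟩

theorem exists_rainbow_path [Fintype V] [Fintype ι] [DecidableEq V] [DecidableEq ι]
    {X : Finset V} {U : Finset ι} (h : RainbowReach D P s X U) (hP : ∀ i, IsSTPath D s t (P i))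
    (hι : {v | v ≠ s ∧ v ≠ t}.ncard < Fintype.card ι) {k : ℕ}
    (hk : ∀ i, (pathEdges (P i)).length ≤ k) (ht : t ∉ X) :
    ∃ Q, IsSTPath D s t Q ∧ (pathEdges Q).length ≤ k ∧ ∃ c, IsRainbowColoring P Q c := by
  obtain ⟨i, hi, y, hy, Q, hQ, hlen⟩ := h.exists_extension hP ht (h.exists_notMem ht hι)
  by_cases hyt : y = t
  · rw [hyt] at hQ hlen
    refine ⟨Q, hQ.1, ?_, hQ.2.2.imp fun _ hc => hc.1⟩
    calc (pathEdges Q).length ≤ (P i).length - 1 :=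
          hlen i hi _ (List.getLast?_eq_getElem? ▸ (hP i).2.2.1)
      _ = (pathEdges (P i)).length := (length_pathEdges _).symm
      _ ≤ k := hk i
  · exact (h.extend hy hi hQ hlen).exists_rainbow_path hP hι hk (by simp [Ne.symm hyt, ht])
termination_by Fintype.card V - X.card
decreasing_by
  have := Finset.card_le_univ (insert y X)
  have := Finset.card_insert_of_notMem hy
  omega

end RainbowReach

theorem exists_rainbow_path_of_ncard_lt [Fintype V] [Fintype ι] {D : V → V → Prop} {s t : V}
    {P : ι → List V} (hP : ∀ i, IsSTPath D s t (P i))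
    (hι : {v | v ≠ s ∧ v ≠ t}.ncard < Fintype.card ι) {k : ℕ}
    (hk : ∀ i, (pathEdges (P i)).length ≤ k) :
    ∃ Q, IsSTPath D s t Q ∧ (pathEdges Q).length ≤ k ∧ ∃ c, IsRainbowColoring P Q c := by
  classical
  have : Nonempty ι := Fintype.card_pos_iff.1 (by omega)
  by_cases hst : s = t
  · subst hst
    exact ⟨[s], isSTPath_singleton D s, by simp [pathEdges], fun _ => Classical.arbitrary ι,
      by simp [IsRainbowColoring, pathEdges]⟩
  · exact RainbowReach.singleton.exists_rainbow_path hP hι hk (by simpa [eq_comm] using hst)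

end

theorem rainbow_path_bounded_length_general {V : Type*} [Fintype V] (D : V → V → Prop)
    (s t : V) {n : ℕ}
    (hn : ({v : V | v ≠ s ∧ v ≠ t}).ncard = n) (k : ℕ)
    (P : Fin (n + 1) → List V) (hP : ∀ i, IsSTPath D s t (P i))
    (hlen : ∀ i, (pathEdges (P i)).length ≤ k) :
    ∃ Q : List V, IsSTPath D s t Q ∧ (pathEdges Q).length ≤ k ∧
      ∃ c : V × V → Fin (n + 1),
        Set.InjOn c {e | e ∈ pathEdges Q} ∧
        ∀ e ∈ pathEdges Q, e ∈ pathEdges (P (c e)) :=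
  exists_rainbow_path_of_ncard_lt hP (by simp [hn]) hlen

/-- With `n` inner vertices, `n+1` directed `s`–`t` paths of length at most `k`
have a rainbow `s`–`t` path of length at most `k`. -/
theorem rainbow_path_bounded_length {V : Type*} [Fintype V] (D : V → V → Prop)
    (s t : V) (hs : ∀ v, ¬ D v s) (ht : ∀ v, ¬ D t v) {n : ℕ}
    (hn : ({v : V | v ≠ s ∧ v ≠ t}).ncard = n) (k : ℕ)
    (P : Fin (n + 1) → List V) (hP : ∀ i, IsSTPath D s t (P i))
    (hlen : ∀ i, (pathEdges (P i)).length ≤ k) :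
    ∃ Q : List V, IsSTPath D s t Q ∧ (pathEdges Q).length ≤ k ∧
      ∃ c : V × V → Fin (n + 1),
        Set.InjOn c {e | e ∈ pathEdges Q} ∧
        ∀ e ∈ pathEdges Q, e ∈ pathEdges (P (c e)) :=
  rainbow_path_bounded_length_general D s t hn k P hP hlen
end

section
/- Let L be a directed graph in which every vertex has in-degree at most 1 and out-degree at most 1, whose vertices lie in S ∪ V° ∪ T where S, V°, T are disjoint, no edge of L enters S and no edge leaves T. Let L_{ST} be the set of connected components of L that are directed paths starting in S and ending in T, and let L_mid be the components that are paths neither starting in S nor ending in T. Then |L_{ST}| = |E(L)| + |V° \ V(L)| - |V°| + |L_mid|, where V(L) is the set of vertices incident to edges of L. -/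
/-!
Every path component of `L` with an edge runs from a *source* (a vertex of `V(L)` without
in-edge) to a *sink* (a vertex of `V(L)` without out-edge), and the map sending a source to the
end of its path is a bijection between sources and sinks. As out-degrees are at most one,
`|V(L)| = |E(L)| + #sinks`; on the other hand `V(L)` is the disjoint union of `S ∩ V(L)`, whose
vertices are all sources, `V° ∩ V(L)`, and `T ∩ V(L)`, whose vertices are all sinks. Sorting the
sources by whether they lie in `S` and whether their sink lies in `T` yields the identity.
-/

namespace LinearishArborescence

variable {V : Type*} [DecidableEq V] [Fintype V]

/-- The edge relation of the digraph with edge set `E`. -/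
def Rel (E : Finset (V × V)) (u v : V) : Prop := (u, v) ∈ E

/-- In-degree of a vertex. -/
def inDeg (E : Finset (V × V)) (v : V) : ℕ := (E.filter (fun e => e.2 = v)).card

/-- Out-degree of a vertex. -/
def outDeg (E : Finset (V × V)) (v : V) : ℕ := (E.filter (fun e => e.1 = v)).card

/-- The set of vertices incident to some edge of `E`. -/
def VL (E : Finset (V × V)) : Finset V := E.image Prod.fst ∪ E.image Prod.snd

/-- The number of connected components of `L` that are directed paths starting
in `S` and ending in `T`.  Since no edge of `L` enters `S`, such a component is
determined by its initial vertex, a vertex of `S` from which some vertex of `T`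
is reachable. -/
noncomputable def nST (E : Finset (V × V)) (S T : Finset V) : ℕ :=
  {a : V | a ∈ S ∧ ∃ b ∈ T, Relation.ReflTransGen (Rel E) a b}.ncard

/-- The number of connected components of `L` that are directed paths neither
starting in `S` nor ending in `T`.  Such a component is determined by its
initial vertex: a vertex of `L` of in-degree `0`, not in `S`, whose component's
final vertex (the reachable vertex of out-degree `0`) is not in `T`. -/
noncomputable def nMid (E : Finset (V × V)) (S T : Finset V) : ℕ :=
  {a : V | a ∈ VL E ∧ inDeg E a = 0 ∧ a ∉ S ∧
    ∃ b, Relation.ReflTransGen (Rel E) a b ∧ outDeg E b = 0 ∧ b ∉ T}.ncard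

end LinearishArborescence

namespace Relation

variable {α : Type*} {r : α → α → Prop} {a b c : α}

theorem ReflTransGen.eq_of_forall_not_rel (h : ReflTransGen r a b) (ha : ∀ c, ¬ r a c) :
    a = b := by
  rcases h.cases_head with hab | ⟨c, hac, -⟩
  · exact hab
  · exact absurd hac (ha c)

theorem ReflTransGen.eq_of_rightUnique (hr : Relator.RightUnique r) (hab : ReflTransGen r a b)
    (hac : ReflTransGen r a c) (hb : ∀ d, ¬ r b d) (hc : ∀ d, ¬ r c d) : b = c := by
  rcases hab.total_of_right_unique hr hac with hbc | hcb
  · exact hbc.eq_of_forall_not_rel hb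
  · exact (hcb.eq_of_forall_not_rel hc).symm

theorem ReflTransGen.eq_of_leftUnique (hr : Relator.LeftUnique r) (hba : ReflTransGen r b a)
    (hca : ReflTransGen r c a) (hb : ∀ d, ¬ r d b) (hc : ∀ d, ¬ r d c) : b = c :=
  eq_of_rightUnique (r := Function.swap r) (fun _ _ _ h₁ h₂ => hr h₁ h₂)
    (reflTransGen_swap.mpr hba) (reflTransGen_swap.mpr hca) hb hc

/-- Injectivity of the successor map on the vertices reachable from `a` forces it to be onto, so
`a` itself would get a predecessor. -/
theorem exists_reflTransGen_forall_not_rel [Finite α] (hr : Relator.LeftUnique r)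
    (ha : ∀ b, ¬ r b a) : ∃ b, ReflTransGen r a b ∧ ∀ c, ¬ r b c := by
  by_contra! hsucc
  choose next hnext using hsucc
  let step : {b // ReflTransGen r a b} → {b // ReflTransGen r a b} :=
    fun b => ⟨next b.1 b.2, b.2.tail (hnext b.1 b.2)⟩
  have hstep : step.Injective := by
    intro b c h
    have hbc : next b.1 b.2 = next c.1 c.2 := congrArg Subtype.val h
    exact Subtype.ext (hr (hnext b.1 b.2) (hbc ▸ hnext c.1 c.2))
  obtain ⟨b, hb⟩ := Finite.surjective_of_injective hstep ⟨a, .refl⟩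
  have hba : next b.1 b.2 = a := congrArg Subtype.val hb
  have hrba := hnext b.1 b.2
  rw [hba] at hrba
  exact ha b.1 hrba

theorem exists_reflTransGen_forall_not_rel' [Finite α] (hr : Relator.RightUnique r)
    (hb : ∀ c, ¬ r b c) : ∃ a, (∀ c, ¬ r c a) ∧ ReflTransGen r a b := by
  obtain ⟨a, hba, ha⟩ := exists_reflTransGen_forall_not_rel (r := Function.swap r)
    (fun _ _ _ h₁ h₂ => hr h₁ h₂) hb
  exact ⟨a, ha, reflTransGen_swap.mp hba⟩

end Relation

namespace Finset

theorem card_eq_card_inter_add_card_inter_add_card_inter {α : Type*} [DecidableEq α]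
    {A B C s : Finset α} (hAB : Disjoint A B) (hAC : Disjoint A C) (hBC : Disjoint B C)
    (hs : s ⊆ A ∪ B ∪ C) : s.card = (A ∩ s).card + (B ∩ s).card + (C ∩ s).card := by
  conv_lhs => rw [← inter_eq_right.mpr hs, union_inter_distrib_right, union_inter_distrib_right]
  rw [card_union_of_disjoint, card_union_of_disjoint]
  · exact hAB.mono inter_subset_left inter_subset_left
  · exact disjoint_union_left.mpr ⟨hAC.mono inter_subset_left inter_subset_left,
      hBC.mono inter_subset_left inter_subset_left⟩

end Finset

namespace LinearishArborescence

section

variable {V : Type*} [DecidableEq V] {E : Finset (V × V)} {S T : Finset V} {a b v : V}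

theorem inDeg_eq_zero_iff : inDeg E v = 0 ↔ ∀ u, ¬ Rel E u v := by
  simp only [inDeg, Rel, Finset.card_eq_zero, Finset.filter_eq_empty_iff, Prod.forall]
  exact ⟨fun h u hu => h u v hu rfl, fun h u w hu hw => h u (hw ▸ hu)⟩

theorem outDeg_eq_zero_iff : outDeg E v = 0 ↔ ∀ w, ¬ Rel E v w := by
  simp only [outDeg, Rel, Finset.card_eq_zero, Finset.filter_eq_empty_iff, Prod.forall]
  exact ⟨fun h w hw => h v w hw rfl, fun h u w hw hu => h w (hu ▸ hw)⟩

theorem leftUnique_rel (hin : ∀ v, inDeg E v ≤ 1) : Relator.LeftUnique (Rel E) :=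
  fun u w v hu hw => congrArg Prod.fst <| Finset.card_le_one.mp (hin v) (u, v)
    (Finset.mem_filter.mpr ⟨hu, rfl⟩) (w, v) (Finset.mem_filter.mpr ⟨hw, rfl⟩)

theorem rightUnique_rel (hout : ∀ v, outDeg E v ≤ 1) : Relator.RightUnique (Rel E) :=
  fun v u w hu hw => congrArg Prod.snd <| Finset.card_le_one.mp (hout v) (v, u)
    (Finset.mem_filter.mpr ⟨hu, rfl⟩) (v, w) (Finset.mem_filter.mpr ⟨hw, rfl⟩)

theorem mem_VL_iff : v ∈ VL E ↔ (∃ w, Rel E v w) ∨ ∃ u, Rel E u v := by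
  simp [VL, Rel]

theorem mem_VL_of_reflTransGen (h : Relation.ReflTransGen (Rel E) a b) (hab : a ≠ b) :
    a ∈ VL E ∧ b ∈ VL E := by
  obtain ⟨c, hac, -⟩ := h.cases_head.resolve_left hab
  obtain ⟨d, -, hdb⟩ := h.cases_tail.resolve_left hab.symm
  exact ⟨mem_VL_iff.mpr (.inl ⟨c, hac⟩), mem_VL_iff.mpr (.inr ⟨d, hdb⟩)⟩

theorem card_image_fst (hout : ∀ v, outDeg E v ≤ 1) : (E.image Prod.fst).card = E.card :=
  Finset.card_image_of_injOn fun e he _ he' h =>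
    Prod.ext h (rightUnique_rel hout (a := e.1) he (h ▸ he'))

def sources (E : Finset (V × V)) : Finset V := (VL E).filter (inDeg E · = 0)

def sinks (E : Finset (V × V)) : Finset V := (VL E).filter (outDeg E · = 0)

theorem inter_VL_eq_filter_sources (hS : ∀ a ∈ S, inDeg E a = 0) :
    S ∩ VL E = (sources E).filter (· ∈ S) := by
  ext a
  simp only [Finset.mem_inter, sources, Finset.mem_filter]
  exact ⟨fun ⟨haS, haL⟩ => ⟨⟨haL, hS a haS⟩, haS⟩, fun ⟨⟨haL, _⟩, haS⟩ => ⟨haS, haL⟩⟩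

theorem inter_VL_eq_filter_sinks (hT : ∀ b ∈ T, outDeg E b = 0) :
    T ∩ VL E = (sinks E).filter (· ∈ T) := by
  ext b
  simp only [Finset.mem_inter, sinks, Finset.mem_filter]
  exact ⟨fun ⟨hbT, hbL⟩ => ⟨⟨hbL, hT b hbT⟩, hbT⟩, fun ⟨⟨hbL, _⟩, hbT⟩ => ⟨hbT, hbL⟩⟩

theorem card_VL_eq_card_add_card_sinks (hout : ∀ v, outDeg E v ≤ 1) :
    (VL E).card = E.card + (sinks E).card := by
  have hfst : (VL E).filter (outDeg E · ≠ 0) = E.image Prod.fst := by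
    ext v
    simp only [Finset.mem_filter, ne_eq, outDeg_eq_zero_iff, not_forall, not_not,
      Finset.mem_image, Rel]
    exact ⟨fun ⟨_, w, hw⟩ => ⟨(v, w), hw, rfl⟩,
      fun ⟨e, he, hev⟩ => ⟨mem_VL_iff.mpr (.inl ⟨e.2, hev ▸ he⟩), e.2, hev ▸ he⟩⟩
  rw [← card_image_fst hout, ← hfst, sinks, add_comm]
  exact (Finset.card_filter_add_card_filter_not _).symm

open Classical in
/-- Junk value `a` when no vertex of out-degree `0` is reachable from `a`. -/
noncomputable def terminus (E : Finset (V × V)) (a : V) : V :=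
  if h : ∃ b, Relation.ReflTransGen (Rel E) a b ∧ outDeg E b = 0 then h.choose else a

theorem terminus_eq (hout : ∀ v, outDeg E v ≤ 1) (h : Relation.ReflTransGen (Rel E) a b)
    (hb : outDeg E b = 0) : terminus E a = b := by
  have hex : ∃ b, Relation.ReflTransGen (Rel E) a b ∧ outDeg E b = 0 := ⟨b, h, hb⟩
  rw [terminus, dif_pos hex]
  exact hex.choose_spec.1.eq_of_rightUnique (rightUnique_rel hout) h
    (outDeg_eq_zero_iff.mp hex.choose_spec.2) (outDeg_eq_zero_iff.mp hb)

variable [Fintype V]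

theorem terminus_spec (hin : ∀ v, inDeg E v ≤ 1) (ha : inDeg E a = 0) :
    Relation.ReflTransGen (Rel E) a (terminus E a) ∧ outDeg E (terminus E a) = 0 := by
  obtain ⟨b, hab, hb⟩ := Relation.exists_reflTransGen_forall_not_rel (leftUnique_rel hin)
    (inDeg_eq_zero_iff.mp ha)
  have hex : ∃ b, Relation.ReflTransGen (Rel E) a b ∧ outDeg E b = 0 :=
    ⟨b, hab, outDeg_eq_zero_iff.mpr hb⟩
  rw [terminus, dif_pos hex]
  exact hex.choose_spec

theorem terminus_mem_sinks (hin : ∀ v, inDeg E v ≤ 1) (ha : a ∈ sources E) :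
    terminus E a ∈ sinks E := by
  obtain ⟨haL, ha0⟩ := Finset.mem_filter.mp ha
  obtain ⟨hr, hb0⟩ := terminus_spec hin ha0
  have hne : a ≠ terminus E a := by
    rintro h
    rcases mem_VL_iff.mp haL with ⟨w, hw⟩ | ⟨u, hu⟩
    · exact outDeg_eq_zero_iff.mp (h ▸ hb0) w hw
    · exact inDeg_eq_zero_iff.mp ha0 u hu
  exact Finset.mem_filter.mpr ⟨(mem_VL_of_reflTransGen hr hne).2, hb0⟩

theorem injOn_terminus (hin : ∀ v, inDeg E v ≤ 1) : Set.InjOn (terminus E) (sources E) := by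
  intro a ha a' ha' h
  have ha0 := (Finset.mem_filter.mp ha).2
  have ha'0 := (Finset.mem_filter.mp ha').2
  exact (terminus_spec hin ha0).1.eq_of_leftUnique (leftUnique_rel hin)
    (h ▸ (terminus_spec hin ha'0).1) (inDeg_eq_zero_iff.mp ha0) (inDeg_eq_zero_iff.mp ha'0)

theorem image_terminus_sources (hin : ∀ v, inDeg E v ≤ 1) (hout : ∀ v, outDeg E v ≤ 1) :
    (sources E).image (terminus E) = sinks E := by
  refine Finset.Subset.antisymm
    (Finset.image_subset_iff.mpr fun a ha => terminus_mem_sinks hin ha) fun b hb => ?_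
  obtain ⟨hbL, hb0⟩ := Finset.mem_filter.mp hb
  obtain ⟨a, ha0, hab⟩ := Relation.exists_reflTransGen_forall_not_rel' (rightUnique_rel hout)
    (outDeg_eq_zero_iff.mp hb0)
  have hne : a ≠ b := by
    rintro rfl
    rcases mem_VL_iff.mp hbL with ⟨w, hw⟩ | ⟨u, hu⟩
    · exact outDeg_eq_zero_iff.mp hb0 w hw
    · exact ha0 u hu
  have haS : a ∈ sources E :=
    Finset.mem_filter.mpr ⟨(mem_VL_of_reflTransGen hab hne).1, inDeg_eq_zero_iff.mpr ha0⟩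
  exact Finset.mem_image.mpr ⟨a, haS, terminus_eq hout hab hb0⟩

theorem card_filter_sources_terminus (hin : ∀ v, inDeg E v ≤ 1) (hout : ∀ v, outDeg E v ≤ 1)
    (p : V → Prop) [DecidablePred p] :
    ((sources E).filter (fun a => p (terminus E a))).card = ((sinks E).filter p).card := by
  rw [← image_terminus_sources hin hout, Finset.filter_image,
    Finset.card_image_of_injOn ((injOn_terminus hin).mono (Finset.filter_subset _ _))]

theorem nST_eq (hin : ∀ v, inDeg E v ≤ 1) (hout : ∀ v, outDeg E v ≤ 1) (hST : Disjoint S T)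
    (hS : ∀ a ∈ S, inDeg E a = 0) (hT : ∀ b ∈ T, outDeg E b = 0) :
    nST E S T = ((sources E).filter fun a => a ∈ S ∧ terminus E a ∈ T).card := by
  rw [nST, ← Set.ncard_coe_finset]
  congr 1
  ext a
  simp only [Set.mem_ofPred_eq, Finset.coe_filter]
  constructor
  · rintro ⟨haS, b, hbT, hab⟩
    have hne : a ≠ b := fun h => Finset.disjoint_left.mp hST haS (h ▸ hbT)
    have haL := (mem_VL_of_reflTransGen hab hne).1
    exact ⟨Finset.mem_filter.mpr ⟨haL, hS a haS⟩, haS, terminus_eq hout hab (hT b hbT) ▸ hbT⟩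
  · rintro ⟨ha, haS, hbT⟩
    exact ⟨haS, _, hbT, (terminus_spec hin (Finset.mem_filter.mp ha).2).1⟩

theorem nMid_eq (hin : ∀ v, inDeg E v ≤ 1) (hout : ∀ v, outDeg E v ≤ 1) :
    nMid E S T = ((sources E).filter fun a => terminus E a ∉ T ∧ a ∉ S).card := by
  rw [nMid, ← Set.ncard_coe_finset]
  congr 1
  ext a
  simp only [Set.mem_ofPred_eq, Finset.coe_filter, sources, Finset.mem_filter]
  constructor
  · rintro ⟨haL, ha0, haS, b, hab, hb0, hbT⟩
    exact ⟨⟨haL, ha0⟩, terminus_eq hout hab hb0 ▸ hbT, haS⟩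
  · rintro ⟨⟨haL, ha0⟩, hbT, haS⟩
    obtain ⟨hab, hb0⟩ := terminus_spec hin ha0
    exact ⟨haL, ha0, haS, _, hab, hb0, hbT⟩

/-- Both sides count the sources that lie in `S` or whose terminus lies outside `T`, the sinks
outside `T` being matched with sources by `terminus`. -/
theorem nST_add_card_filter_sinks (hin : ∀ v, inDeg E v ≤ 1) (hout : ∀ v, outDeg E v ≤ 1)
    (hST : Disjoint S T) (hS : ∀ a ∈ S, inDeg E a = 0) (hT : ∀ b ∈ T, outDeg E b = 0) :
    nST E S T + ((sinks E).filter (· ∉ T)).card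
      = ((sources E).filter (· ∈ S)).card + nMid E S T := by
  rw [nST_eq hin hout hST hS hT, nMid_eq hin hout,
    ← card_filter_sources_terminus hin hout (· ∉ T)]
  have hsplitS := Finset.card_filter_add_card_filter_not
    (s := (sources E).filter (· ∈ S)) (terminus E · ∈ T)
  have hsplitT := Finset.card_filter_add_card_filter_not
    (s := (sources E).filter (terminus E · ∉ T)) (· ∈ S)
  have hcomm : ((sources E).filter fun a => terminus E a ∉ T ∧ a ∈ S)
      = (sources E).filter fun a => a ∈ S ∧ terminus E a ∉ T :=
    Finset.filter_congr fun _ _ => and_comm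
  simp only [Finset.filter_filter] at hsplitS hsplitT
  rw [hcomm] at hsplitT
  omega

end

variable {V : Type*} [DecidableEq V] [Fintype V]

/-- Counting the `S`–`T` path components of a linearish arborescence `L` (a
digraph with all in- and out-degrees at most `1`) whose vertices lie in
`S ∪ V° ∪ T`, with no edge entering `S` and no edge leaving `T`:
`|L_ST| = |E(L)| + |V° \ V(L)| - |V°| + |L_mid|`. -/
theorem count_ST_components (E : Finset (V × V)) (S Vm T : Finset V)
    (hin : ∀ v, inDeg E v ≤ 1) (hout : ∀ v, outDeg E v ≤ 1)
    (hSV : Disjoint S Vm) (hST : Disjoint S T) (hVT : Disjoint Vm T)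
    (hvert : ∀ e ∈ E, e.1 ∈ S ∪ Vm ∪ T ∧ e.2 ∈ S ∪ Vm ∪ T)
    (hS : ∀ e ∈ E, e.2 ∉ S) (hT : ∀ e ∈ E, e.1 ∉ T) :
    (nST E S T : ℤ) =
      (E.card : ℤ) + ((Vm \ VL E).card : ℤ) - (Vm.card : ℤ)
        + (nMid E S T : ℤ) := by
  have hS0 : ∀ a ∈ S, inDeg E a = 0 := fun a ha =>
    inDeg_eq_zero_iff.mpr fun _ hu => hS _ hu ha
  have hT0 : ∀ b ∈ T, outDeg E b = 0 := fun b hb =>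
    outDeg_eq_zero_iff.mpr fun _ hw => hT _ hw hb
  have hcover : VL E ⊆ S ∪ Vm ∪ T := by
    intro v hv
    rcases Finset.mem_union.mp hv with hv | hv <;> obtain ⟨e, he, rfl⟩ := Finset.mem_image.mp hv
    exacts [(hvert e he).1, (hvert e he).2]
  have hVL := Finset.card_eq_card_inter_add_card_inter_add_card_inter hSV hST hVT hcover
  rw [inter_VL_eq_filter_sources hS0, inter_VL_eq_filter_sinks hT0] at hVL
  have hpaths := nST_add_card_filter_sinks hin hout hST hS0 hT0
  have hsinks := Finset.card_filter_add_card_filter_not (s := sinks E) (· ∈ T)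
  have hVm := Finset.card_inter_add_card_sdiff Vm (VL E)
  have hE := card_VL_eq_card_add_card_sinks hout
  omega

end LinearishArborescence
end

section
/- Let M be a matroid of rank n on ground set V, let T ⊆ V, and let A₁, ..., Aₙ be subsets of V such that for every J ⊆ [n], either rank(⋃_{j∈J} Aⱼ) ≥ |J| or T ⊆ span(⋃_{j∈J} Aⱼ). Then there exist a subset I ⊆ [n] and pairwise distinct elements aᵢ ∈ Aᵢ for i ∈ I such that T ⊆ span({aᵢ : i ∈ I}). -/
/-!
Among the index sets `J` with `T ⊆ cl(A_J)` and `r(A_J) ≤ |J|` (the full index set is one, as `M`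
has rank `n`) pick a minimal one. Minimality and the hypothesis force Hall's condition
`|K| ≤ r(A_K)` for all `K ⊆ J`, so by Rado's theorem the `A_j`, `j ∈ J`, have an independent
transversal. It is a subset of `A_J` with `|J| ≥ r(A_J)` elements, hence spans `A_J` and so `T`.

Rado's theorem goes by induction on `|I|`: fix `j ∈ I`, let `D` be the largest tight
(`r(A_D) = |D|`) subset of `I - j`, which exists because tight sets are closed under union by
submodularity, pick `e ∈ A_j` outside `cl(A_D)` and contract `e`.
-/

-- On a matroid of infinite rank the set is unbounded and `sSup` takes the junk value `0`.
noncomputable def Matroid.setRk {α : Type*} (M : Matroid α) (X : Set α) : ℕ :=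
  sSup {n : ℕ | ∃ I, M.Indep I ∧ I ⊆ X ∧ I.ncard = n}

open Set

namespace Matroid

variable {α : Type*} {M : Matroid α} {X Y I J B : Set α} {e : α}

lemma Indep.eRk_contract_add_encard (hJ : M.Indep J) (X : Set α) :
    (M ／ J).eRk X + J.encard = M.eRk (X ∪ J) := by
  obtain ⟨I, hI, hJI⟩ := hJ.subset_isBasis'_of_subset (subset_union_right : J ⊆ X ∪ J)
  have hIJ := hI.contract_isBasis_of_indep (J := J)
    (by rw [union_eq_self_of_subset_right hJI]; exact hI.indep)
  rw [← hI.encard_eq_eRk, ← encard_sdiff_add_encard_of_subset hJI, hIJ.encard_eq_eRk,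
    ← eRk_inter_ground, ← (M ／ J).eRk_inter_ground ((X ∪ J) \ J), contract_ground]
  congr 2
  tauto_set

variable [M.RankFinite]

lemma cast_setRk (M : Matroid α) [M.RankFinite] (X : Set α) : (M.setRk X : ℕ∞) = M.eRk X := by
  obtain ⟨I, hI⟩ := M.exists_isBasis' X
  rw [← hI.encard_eq_eRk, ← hI.indep.finite.cast_ncard_eq, Nat.cast_inj]
  refine IsGreatest.csSup_eq ⟨⟨I, hI.indep, hI.subset, rfl⟩, ?_⟩
  rintro _ ⟨J, hJ, hJX, rfl⟩
  have hle := hJ.encard_le_eRk_of_subset hJX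
  rwa [← hI.encard_eq_eRk, ← hI.indep.finite.cast_ncard_eq, ← hJ.finite.cast_ncard_eq,
    Nat.cast_le] at hle

lemma setRk_mono (h : X ⊆ Y) : M.setRk X ≤ M.setRk Y := by
  have hle := M.eRk_mono h
  rwa [← cast_setRk, ← cast_setRk, Nat.cast_le] at hle

lemma setRk_inter_add_setRk_union_le (X Y : Set α) :
    M.setRk (X ∩ Y) + M.setRk (X ∪ Y) ≤ M.setRk X + M.setRk Y := by
  have hle := M.eRk_inter_add_eRk_union_le X Y
  simp only [← cast_setRk] at hle
  exact_mod_cast hle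

lemma setRk_insert_of_mem_sdiff (he : e ∈ M.E \ M.closure X) :
    M.setRk (insert e X) = M.setRk X + 1 := by
  have heq := eRk_insert_eq_add_one he
  rw [← cast_setRk, ← cast_setRk] at heq
  exact_mod_cast heq

lemma Indep.setRk_eq_ncard (hI : M.Indep I) : M.setRk I = I.ncard := by
  have heq := hI.eRk_eq_encard
  rwa [← cast_setRk, ← hI.finite.cast_ncard_eq, Nat.cast_inj] at heq

lemma IsBase.setRk_le_ncard (hB : M.IsBase B) (X : Set α) : M.setRk X ≤ B.ncard := by
  have hle := M.eRk_le_eRank X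
  rwa [← hB.encard_eq_eRank, ← cast_setRk, ← hB.finite.cast_ncard_eq, Nat.cast_le] at hle

lemma closure_eq_closure_of_subset_of_setRk_le (hXY : X ⊆ Y) (h : M.setRk Y ≤ M.setRk X) :
    M.closure X = M.closure Y :=
  (M.isRkFinite_set X).closure_eq_closure_of_subset_of_eRk_ge_eRk hXY
    (by rwa [← cast_setRk, ← cast_setRk, Nat.cast_le])

lemma IsBase.ground_subset_closure_of_ncard_le (hB : M.IsBase B) (h : B.ncard ≤ M.setRk X) :
    M.E ⊆ M.closure X := by
  rw [closure_eq_closure_of_subset_of_setRk_le subset_union_left ((hB.setRk_le_ncard _).trans h)]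
  exact M.subset_closure_of_subset' subset_union_right

lemma exists_mem_sdiff_closure_of_setRk_lt (h : M.setRk X < M.setRk (Y ∪ X)) :
    ∃ e ∈ Y, e ∈ M.E \ M.closure X := by
  by_contra! hY
  have hle : M.eRk (Y ∪ X) ≤ M.eRk X := by
    rw [← eRk_inter_ground, ← M.eRk_closure_eq X]
    exact M.eRk_mono fun e ⟨heYX, heE⟩ ↦
      heYX.elim (fun heY ↦ by_contra fun hcl ↦ hY e heY ⟨heE, hcl⟩) (M.mem_closure_of_mem' · heE)
  rw [← cast_setRk, ← cast_setRk, Nat.cast_le] at hle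
  exact h.not_ge hle

lemma IsNonloop.setRk_contract_add_one (he : M.IsNonloop e) (X : Set α) :
    (M ／ {e}).setRk X + 1 = M.setRk (insert e X) := by
  have heq := he.indep.eRk_contract_add_encard X
  rw [encard_singleton, union_singleton, ← cast_setRk, ← cast_setRk] at heq
  exact_mod_cast heq

section Rado

variable {ι : Type*} [DecidableEq ι] {A : ι → Set α}

lemma setRk_biUnion_union_le_card {K₁ K₂ : Finset ι}
    (h₁ : M.setRk (⋃ j ∈ K₁, A j) ≤ K₁.card) (h₂ : M.setRk (⋃ j ∈ K₂, A j) ≤ K₂.card)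
    (hinter : (K₁ ∩ K₂).card ≤ M.setRk (⋃ j ∈ K₁ ∩ K₂, A j)) :
    M.setRk (⋃ j ∈ K₁ ∪ K₂, A j) ≤ (K₁ ∪ K₂).card := by
  have hsubmod := M.setRk_inter_add_setRk_union_le (⋃ j ∈ K₁, A j) (⋃ j ∈ K₂, A j)
  rw [← Finset.set_biUnion_union] at hsubmod
  have hmono : M.setRk (⋃ j ∈ K₁ ∩ K₂, A j) ≤ M.setRk ((⋃ j ∈ K₁, A j) ∩ ⋃ j ∈ K₂, A j) :=
    setRk_mono (subset_inter
      (biUnion_subset_biUnion_left (Finset.coe_subset.2 Finset.inter_subset_left))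
      (biUnion_subset_biUnion_left (Finset.coe_subset.2 Finset.inter_subset_right)))
  have hcard := Finset.card_union_add_card_inter K₁ K₂
  omega

lemma exists_greatest_tight (S : Finset ι)
    (hall : ∀ K ⊆ S, K.card ≤ M.setRk (⋃ j ∈ K, A j)) :
    ∃ D ⊆ S, M.setRk (⋃ j ∈ D, A j) ≤ D.card ∧
      ∀ K ⊆ S, M.setRk (⋃ j ∈ K, A j) ≤ K.card → K ⊆ D := by
  set tight := S.powerset.filter fun K ↦ M.setRk (⋃ j ∈ K, A j) ≤ K.card
  have hD : tight.sup id ∈ tight := by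
    refine Finset.sup_induction ?_ (fun K₁ h₁ K₂ h₂ ↦ ?_) fun K hK ↦ hK
    · simp [tight, M.empty_indep.setRk_eq_ncard]
    simp only [tight, Finset.mem_filter, Finset.mem_powerset] at h₁ h₂ ⊢
    exact ⟨Finset.union_subset h₁.1 h₂.1, setRk_biUnion_union_le_card h₁.2 h₂.2
      (hall _ (Finset.inter_subset_left.trans h₁.1))⟩
  simp only [tight, Finset.mem_filter, Finset.mem_powerset] at hD
  exact ⟨_, hD.1, hD.2, fun K hK hKt ↦
    Finset.le_sup (f := id) (by simp [hK, hKt])⟩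

theorem exists_injOn_indep_of_forall_card_le_setRk [Nonempty (ι → α)] (I : Finset ι)
    (hall : ∀ K ⊆ I, K.card ≤ M.setRk (⋃ j ∈ K, A j)) :
    ∃ a : ι → α, InjOn a I ∧ (∀ i ∈ I, a i ∈ A i) ∧ M.Indep (a '' I) := by
  induction I using Finset.strongInduction generalizing M with
  | H I ih =>
  rcases I.eq_empty_or_nonempty with rfl | ⟨j, hj⟩
  · exact ⟨Classical.arbitrary _, by simp, by simp, by simp⟩
  obtain ⟨D, hDI, hD, hDmax⟩ :=
    exists_greatest_tight (I.erase j) fun K hK ↦ hall K (hK.trans (I.erase_subset j))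
  have hjD : j ∉ D := fun h ↦ Finset.notMem_erase j I (hDI h)
  obtain ⟨e, heA, he⟩ : ∃ e ∈ A j, e ∈ M.E \ M.closure (⋃ i ∈ D, A i) := by
    refine exists_mem_sdiff_closure_of_setRk_lt ?_
    have hins := hall (insert j D) (Finset.insert_subset hj (hDI.trans (I.erase_subset j)))
    rw [Finset.set_biUnion_insert, Finset.card_insert_of_notMem hjD] at hins
    omega
  have hnl : M.IsNonloop e := isNonloop_iff_mem_compl_loops.2
    ⟨he.1, fun hl ↦ he.2 (M.closure_subset_closure (empty_subset _) hl)⟩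
  -- Contracting `e` lowers `r(A_K)` only if `e ∈ cl(A_K)`, and then `K` is not tight,
  -- as `e ∉ cl(A_D)`.
  have hall' : ∀ K ⊆ I.erase j, K.card ≤ (M ／ {e}).setRk (⋃ i ∈ K, A i) := by
    intro K hK
    have hrk := hnl.setRk_contract_add_one (⋃ i ∈ K, A i)
    by_cases heK : e ∈ M.closure (⋃ i ∈ K, A i)
    · have hloose : K.card < M.setRk (⋃ i ∈ K, A i) := by
        by_contra! htight
        exact he.2 (M.closure_subset_closure
          (biUnion_subset_biUnion_left (Finset.coe_subset.2 (hDmax K hK htight))) heK)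
      have := M.setRk_mono (subset_insert e (⋃ i ∈ K, A i))
      omega
    · rw [setRk_insert_of_mem_sdiff ⟨hnl.mem_ground, heK⟩] at hrk
      have := hall K (hK.trans (I.erase_subset j))
      omega
  obtain ⟨a, hinj, hmem, hind⟩ := ih (I.erase j) (Finset.erase_ssubset hj) hall'
  rw [hnl.contractElem_indep_iff] at hind
  have hupd : EqOn (Function.update a j e) a ↑(I.erase j) :=
    fun i hi ↦ Function.update_of_ne (Finset.ne_of_mem_erase hi) _ _
  have hI : (↑I : Set ι) = insert j ↑(I.erase j) := by
    rw [← Finset.coe_insert, Finset.insert_erase hj]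
  refine ⟨Function.update a j e, ?_, fun i hi ↦ ?_, ?_⟩
  · rw [hI, injOn_insert (by simp), Function.update_self, hupd.image_eq]
    exact ⟨hinj.congr hupd.symm, hind.1⟩
  · rcases eq_or_ne i j with rfl | hij
    · rwa [Function.update_self]
    · rw [Function.update_of_ne hij]
      exact hmem i (Finset.mem_erase.2 ⟨hij, hi⟩)
  · rw [hI, image_insert_eq, Function.update_self, hupd.image_eq]
    exact hind.2

lemma forall_card_le_setRk_of_minimal {T : Set α} {J : Finset ι}
    (hJ : Minimal (fun K : Finset ι ↦
      T ⊆ M.closure (⋃ j ∈ K, A j) ∧ M.setRk (⋃ j ∈ K, A j) ≤ K.card) J)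
    (hyp : ∀ K ⊆ J, K.card ≤ M.setRk (⋃ j ∈ K, A j) ∨ T ⊆ M.closure (⋃ j ∈ K, A j)) :
    ∀ K ⊆ J, K.card ≤ M.setRk (⋃ j ∈ K, A j) := by
  have hproper : ∀ K ⊂ J, K.card ≤ M.setRk (⋃ j ∈ K, A j) := by
    intro K hK
    refine (hyp K hK.subset).elim id fun hT ↦ ?_
    by_contra! h
    exact hK.2 (hJ.2 ⟨hT, h.le⟩ hK.subset)
  intro K hK
  obtain hK | rfl := hK.ssubset_or_eq
  · exact hproper K hK
  obtain rfl | ⟨j, hj⟩ := K.eq_empty_or_nonempty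
  · simp
  have herase := hproper (K.erase j) (Finset.erase_ssubset hj)
  have hcard := Finset.card_erase_add_one hj
  by_contra! h
  -- Otherwise `A_{K - j}` has the same closure as `A_K`, contradicting minimality.
  have hsub : ⋃ i ∈ K.erase j, A i ⊆ ⋃ i ∈ K, A i :=
    biUnion_subset_biUnion_left (Finset.coe_subset.2 (K.erase_subset j))
  have hcl := closure_eq_closure_of_subset_of_setRk_le (M := M) hsub (by omega)
  have hle := M.setRk_mono hsub
  exact Finset.notMem_erase j K
    (hJ.2 ⟨hJ.1.1.trans hcl.symm.subset, by omega⟩ (K.erase_subset j) hj)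

end Rado

end Matroid

open Matroid in
theorem rainbow_spanning_cooperative_general {α : Type*}
    {M : Matroid α} [M.Finite] {n : ℕ}
    (hrank : ∃ B, M.IsBase B ∧ B.ncard = n)
    (T : Set α) (hT : T ⊆ M.E)
    (A : Fin n → Set α)
    (hyp : ∀ J : Finset (Fin n),
      (J.card : ℕ) ≤ M.setRk (⋃ j ∈ J, A j) ∨ T ⊆ M.closure (⋃ j ∈ J, A j)) :
    ∃ (I : Finset (Fin n)) (a : Fin n → α),
      Set.InjOn a ↑I ∧ (∀ i ∈ I, a i ∈ A i) ∧
      T ⊆ M.closure (a '' ↑I) := by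
  obtain ⟨B, hB, rfl⟩ := hrank
  have : Nonempty (Fin B.ncard → α) := ⟨fun i ↦ (nonempty_of_ncard_ne_zero i.pos.ne').some⟩
  set spansTight : Finset (Fin B.ncard) → Prop := fun K ↦
    T ⊆ M.closure (⋃ j ∈ K, A j) ∧ M.setRk (⋃ j ∈ K, A j) ≤ K.card
  have huniv : spansTight Finset.univ := by
    simp only [spansTight, Finset.card_univ, Fintype.card_fin]
    exact ⟨(hyp _).elim (fun h ↦ hT.trans (hB.ground_subset_closure_of_ncard_le (by simpa using h)))
      id, hB.setRk_le_ncard _⟩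
  obtain ⟨J, -, hJ⟩ := exists_minimal_le_of_wellFoundedLT spansTight _ huniv
  obtain ⟨a, hinj, hmem, hind⟩ := exists_injOn_indep_of_forall_card_le_setRk J
    (forall_card_le_setRk_of_minimal hJ fun K _ ↦ hyp K)
  have hsub : a '' J ⊆ ⋃ j ∈ J, A j := image_subset_iff.2 fun i hi ↦ mem_biUnion hi (hmem i hi)
  have hrk : M.setRk (⋃ j ∈ J, A j) ≤ M.setRk (a '' J) := by
    rw [hind.setRk_eq_ncard, hinj.ncard_image, ncard_coe_finset]
    exact hJ.1.2
  exact ⟨J, a, hinj, hmem,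
    hJ.1.1.trans (closure_eq_closure_of_subset_of_setRk_le hsub hrk).superset⟩

/-- Cooperative spanning theorem: if `M` has rank `n`, `T ⊆ V`, and sets
`A 1, …, A n` satisfy, for every `J ⊆ [n]`, either `rank(A_J) ≥ |J|` or
`T ⊆ span(A_J)`, then some rainbow set of the `A i` spans `T`. -/
theorem rainbow_spanning_cooperative {α : Type*} [DecidableEq α]
    {M : Matroid α} [M.Finite] {n : ℕ}
    (hrank : ∃ B, M.IsBase B ∧ B.ncard = n)
    (T : Set α) (hT : T ⊆ M.E)
    (A : Fin n → Set α) (hA : ∀ i, A i ⊆ M.E)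
    (hyp : ∀ J : Finset (Fin n),
      (J.card : ℕ) ≤ M.setRk (⋃ j ∈ J, A j) ∨ T ⊆ M.closure (⋃ j ∈ J, A j)) :
    ∃ (I : Finset (Fin n)) (a : Fin n → α),
      Set.InjOn a ↑I ∧ (∀ i ∈ I, a i ∈ A i) ∧
      T ⊆ M.closure (a '' ↑I) :=
  rainbow_spanning_cooperative_general hrank T hT A hyp
end

section
/- Let G be a bipartite graph whose edge set is partitioned as E = F₁ ∪ ... ∪ F_{2k-1} into 2k-1 nonempty sets, such that for every pair i < j the set Fᵢ ∪ Fⱼ contains a matching of size k. Then there exist a k-element subset I ⊆ [2k-1] and pairwise disjoint edges e_i ∈ F_i for i ∈ I (a rainbow matching of size k). -/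
/-!
Take a maximum rainbow matching `R` and suppose `|R| < k`. Grow an alternating forest whose entries
are edges of pairwise distinct colors unused by `R`, each ending at a new vertex covered by `R` and
starting at a vertex that is uncovered or whose `R`-partner has already been reached. While fewer
than `|R|` vertices are reached, two colors are still unused, and the matching of size `k` in the
union of their classes contains an edge extending the forest: an edge reaching an uncovered vertex
would augment `R` along the forest. Once all of `R` is reached, some color `d` is still unused and
all its edges end at vertices covered by `R`. An edge of `d`, followed by the alternating path back
from its start, seeds a new forest using `d`, unless it closes an alternating cycle, along which `R`
can be rotated to use `d`. Either way a full forest that uses `d` leaves another unused color `c`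
whose edges also end in `R`, and `F c ∪ F d` cannot contain a matching of size `k > |R|`.
-/

/-- A set of edges of a bipartite graph (edges being pairs) is a matching if no
two of its edges share an endpoint. -/
def IsBipMatching {α β : Type*} (N : Finset (α × β)) : Prop :=
  Set.InjOn Prod.fst (N : Set (α × β)) ∧ Set.InjOn Prod.snd (N : Set (α × β))

namespace CooperativeDrisko

open Finset

variable {α β : Type*} {n : ℕ}

/-- A colored edge `(c, x, y)` is the edge `(x, y)` taken from the class `F c`. -/
def colors (S : Finset (Fin n × α × β)) : Finset (Fin n) := S.image Prod.fst

def lefts [DecidableEq α] (S : Finset (Fin n × α × β)) : Finset α := S.image (·.2.1)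

def rights [DecidableEq β] (S : Finset (Fin n × α × β)) : Finset β := S.image (·.2.2)

def usedColors (R : Finset (Fin n × α × β)) (L : List (Fin n × α × β)) : Finset (Fin n) :=
  colors R ∪ (L.map Prod.fst).toFinset

@[simp] lemma mem_colors {S : Finset (Fin n × α × β)} {c : Fin n} :
    c ∈ colors S ↔ ∃ p ∈ S, p.1 = c := mem_image

@[simp] lemma mem_lefts [DecidableEq α] {S : Finset (Fin n × α × β)} {x : α} :
    x ∈ lefts S ↔ ∃ p ∈ S, p.2.1 = x := mem_image

@[simp] lemma mem_rights [DecidableEq β] {S : Finset (Fin n × α × β)} {y : β} :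
    y ∈ rights S ↔ ∃ p ∈ S, p.2.2 = y := mem_image

@[simp] lemma mem_usedColors {R : Finset (Fin n × α × β)} {L : List (Fin n × α × β)} {c : Fin n} :
    c ∈ usedColors R L ↔ c ∈ colors R ∨ c ∈ L.map Prod.fst := by
  simp only [usedColors, mem_union, List.mem_toFinset]

lemma card_usedColors_le (R : Finset (Fin n × α × β)) (L : List (Fin n × α × β)) :
    (usedColors R L).card ≤ R.card + L.length :=
  (card_union_le _ _).trans <| add_le_add card_image_le <|
    (List.toFinset_card_le _).trans (List.length_map _).le

lemma usedColors_mono {R₁ R : Finset (Fin n × α × β)} {L₁ L : List (Fin n × α × β)}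
    (hR : R₁ ⊆ R) (hL : L₁.map Prod.fst ⊆ L.map Prod.fst) : usedColors R₁ L₁ ⊆ usedColors R L :=
  union_subset_union (image_subset_image hR) fun _ hc =>
    List.mem_toFinset.2 (hL (List.mem_toFinset.1 hc))

lemma exists_notMem_of_card_lt {s : Finset (Fin n)} (h : s.card < n) : ∃ c, c ∉ s :=
  let ⟨c, _, hc⟩ := exists_mem_notMem_of_card_lt_card (t := univ) (by simpa using h)
  ⟨c, hc⟩

lemma insert_usedColors_subset {R₁ R : Finset (Fin n × α × β)} (h : R₁ ⊆ R)
    (t : Fin n × α × β) (L : List (Fin n × α × β)) :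
    insert t.1 (usedColors R₁ L) ⊆ usedColors R (t :: L) := by
  intro c hc
  simp only [mem_insert, mem_usedColors, List.map_cons, List.mem_cons] at hc ⊢
  rcases hc with hc | hc | hc
  · exact Or.inr (Or.inl hc)
  · exact Or.inl (image_subset_image h hc)
  · exact Or.inr (Or.inr hc)

@[simp] lemma colors_insert [DecidableEq α] [DecidableEq β] (p : Fin n × α × β)
    (S : Finset (Fin n × α × β)) :
    colors (insert p S) = insert p.1 (colors S) := image_insert ..

@[simp] lemma lefts_insert [DecidableEq α] [DecidableEq β] (p : Fin n × α × β)
    (S : Finset (Fin n × α × β)) :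
    lefts (insert p S) = insert p.2.1 (lefts S) := image_insert ..

@[simp] lemma rights_insert [DecidableEq α] [DecidableEq β] (p : Fin n × α × β)
    (S : Finset (Fin n × α × β)) :
    rights (insert p S) = insert p.2.2 (rights S) := image_insert ..

structure IsRainbowMatching (F : Fin n → Finset (α × β)) (S : Finset (Fin n × α × β)) :
    Prop where
  mem : ∀ p ∈ S, p.2 ∈ F p.1
  injOn_color : Set.InjOn Prod.fst (S : Set (Fin n × α × β))
  injOn_left : Set.InjOn (·.2.1) (S : Set (Fin n × α × β))
  injOn_right : Set.InjOn (·.2.2) (S : Set (Fin n × α × β))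

variable {F : Fin n → Finset (α × β)}

namespace IsRainbowMatching

lemma empty : IsRainbowMatching F (∅ : Finset (Fin n × α × β)) :=
  ⟨by simp, by simp, by simp, by simp⟩

lemma mono {S T : Finset (Fin n × α × β)} (hS : IsRainbowMatching F S) (h : T ⊆ S) :
    IsRainbowMatching F T :=
  ⟨fun p hp => hS.mem p (h hp), hS.injOn_color.mono (coe_subset.2 h),
    hS.injOn_left.mono (coe_subset.2 h), hS.injOn_right.mono (coe_subset.2 h)⟩

lemma card_colors {S : Finset (Fin n × α × β)} (hS : IsRainbowMatching F S) :
    (colors S).card = S.card :=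
  card_image_of_injOn hS.injOn_color

lemma card_rights [DecidableEq β] {S : Finset (Fin n × α × β)} (hS : IsRainbowMatching F S) :
    (rights S).card = S.card :=
  card_image_of_injOn hS.injOn_right

lemma insert [DecidableEq α] [DecidableEq β] {S : Finset (Fin n × α × β)}
    (hS : IsRainbowMatching F S) {p : Fin n × α × β}
    (hF : p.2 ∈ F p.1) (hc : p.1 ∉ colors S) (hx : p.2.1 ∉ lefts S) (hy : p.2.2 ∉ rights S) :
    IsRainbowMatching F (insert p S) := by
  have hp : p ∉ (S : Set (Fin n × α × β)) := fun h => hc (mem_colors.2 ⟨p, h, rfl⟩)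
  refine ⟨by simpa [hF] using hS.mem, ?_, ?_, ?_⟩ <;> rw [coe_insert, Set.injOn_insert hp]
  · exact ⟨hS.injOn_color, fun ⟨q, hq, he⟩ => hc (mem_colors.2 ⟨q, hq, he⟩)⟩
  · exact ⟨hS.injOn_left, fun ⟨q, hq, he⟩ => hx (mem_lefts.2 ⟨q, hq, he⟩)⟩
  · exact ⟨hS.injOn_right, fun ⟨q, hq, he⟩ => hy (mem_rights.2 ⟨q, hq, he⟩)⟩

lemma lefts_erase [DecidableEq α] [DecidableEq β] {S : Finset (Fin n × α × β)}
    (hS : IsRainbowMatching F S) {q : Fin n × α × β} (hq : q ∈ S) :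
    lefts (S.erase q) = (lefts S).erase q.2.1 := by
  ext x
  simp only [mem_lefts, Finset.mem_erase]
  constructor
  · rintro ⟨p, ⟨hpq, hpS⟩, rfl⟩
    exact ⟨fun h => hpq (hS.injOn_left hpS hq h), p, hpS, rfl⟩
  · rintro ⟨hx, p, hpS, rfl⟩
    exact ⟨p, ⟨by rintro rfl; exact hx rfl, hpS⟩, rfl⟩

lemma rights_erase [DecidableEq α] [DecidableEq β] {S : Finset (Fin n × α × β)}
    (hS : IsRainbowMatching F S) {q : Fin n × α × β} (hq : q ∈ S) :
    rights (S.erase q) = (rights S).erase q.2.2 := by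
  ext y
  simp only [mem_rights, Finset.mem_erase]
  constructor
  · rintro ⟨p, ⟨hpq, hpS⟩, rfl⟩
    exact ⟨fun h => hpq (hS.injOn_right hpS hq h), p, hpS, rfl⟩
  · rintro ⟨hy, p, hpS, rfl⟩
    exact ⟨p, ⟨by rintro rfl; exact hy rfl, hpS⟩, rfl⟩

end IsRainbowMatching

/-- An alternating path from `x`: at each entry `t` the current left vertex is matched by `R` to
`t.2.2`, and `t.2` is a new edge of an unused color `t.1` from `t.2.1` to `t.2.2`; the path goes on
from `t.2.1` and ends at a left vertex not covered by `R`. -/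
def IsAltChain [DecidableEq α] (F : Fin n → Finset (α × β)) (R : Finset (Fin n × α × β)) :
    α → List (Fin n × α × β) → Prop
  | x, [] => x ∉ lefts R
  | x, t :: cs => (∃ c, (c, x, t.2.2) ∈ R) ∧ t.2 ∈ F t.1 ∧ t.1 ∉ usedColors R cs ∧
      t.2.2 ∉ cs.map (·.2.2) ∧ IsAltChain F R t.2.1 cs

def chainEnd : List (Fin n × α × β) → α → α
  | [], x => x
  | t :: cs, _ => chainEnd cs t.2.1

namespace IsAltChain

lemma chainEnd_notMem_lefts [DecidableEq α] {R : Finset (Fin n × α × β)} :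
    ∀ {cs : List (Fin n × α × β)} {x : α}, IsAltChain F R x cs → chainEnd cs x ∉ lefts R
  | [], _, h => h
  | t :: cs, _, h => chainEnd_notMem_lefts (cs := cs) (x := t.2.1) h.2.2.2.2

variable [DecidableEq α] [DecidableEq β]

lemma erase {R : Finset (Fin n × α × β)} {q : Fin n × α × β} :
    ∀ {cs : List (Fin n × α × β)} {x : α}, IsAltChain F R x cs →
      q.2.2 ∉ cs.map (·.2.2) → IsAltChain F (R.erase q) x cs
  | [], _, h, _ => fun hx => h (image_subset_image (erase_subset q R) hx)
  | t :: cs, x, ⟨⟨c, hlink⟩, htF, htc, htz, hrest⟩, hq => by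
    refine ⟨⟨c, mem_erase.2 ⟨?_, hlink⟩⟩, htF, ?_, htz, hrest.erase fun h => hq ?_⟩
    · rintro rfl
      exact hq (List.mem_cons_self ..)
    · simp only [mem_usedColors, mem_colors, not_or, not_exists, not_and] at htc ⊢
      exact ⟨fun p hp => htc.1 p (mem_of_mem_erase hp), htc.2⟩
    · exact List.mem_cons_of_mem _ h

lemma exists_erase_of_append {R : Finset (Fin n × α × β)} (hR : IsRainbowMatching F R)
    {t : Fin n × α × β} {post : List (Fin n × α × β)} :
    ∀ {pre : List (Fin n × α × β)} {x : α}, IsAltChain F R x (pre ++ t :: post) →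
      ∃ q ∈ R, q.2.2 = t.2.2 ∧ IsAltChain F (R.erase q) x pre
  | [], x, ⟨⟨c, hlink⟩, _⟩ => by
    refine ⟨(c, x, t.2.2), hlink, rfl, fun hx => ?_⟩
    rw [hR.lefts_erase hlink] at hx
    exact (mem_erase.1 hx).1 rfl
  | u :: pre, x, ⟨⟨c, hlink⟩, huF, huc, huz, hrest⟩ => by
    obtain ⟨q, hqR, hqz, hchain⟩ := exists_erase_of_append hR hrest
    have hut : u.2.2 ≠ t.2.2 := fun h => huz (by simp [h])
    refine ⟨q, hqR, hqz, ⟨c, mem_erase.2 ⟨?_, hlink⟩⟩, huF, ?_, fun h => huz (by simp_all), hchain⟩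
    · rintro rfl
      exact hut hqz
    · simp only [mem_usedColors, mem_colors, not_or, not_exists, not_and] at huc ⊢
      exact ⟨fun p hp => huc.1 p (mem_of_mem_erase hp),
        fun h => huc.2 (by simp [List.append_eq, h])⟩

/-- The conclusions on `lefts`, `rights` and `colors` carry the induction along the chain. -/
lemma exists_augment :
    ∀ {cs : List (Fin n × α × β)} {R : Finset (Fin n × α × β)} {x : α} {χ : Fin n} {y : β},
      IsRainbowMatching F R → IsAltChain F R x cs → (x, y) ∈ F χ → χ ∉ usedColors R cs →
      y ∉ rights R →
      ∃ S, IsRainbowMatching F S ∧ S.card = R.card + 1 ∧ rights S = insert y (rights R) ∧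
        lefts S ⊆ insert (chainEnd cs x) (lefts R) ∧ χ ∈ colors S ∧
        colors S ⊆ insert χ (usedColors R cs)
  | [], R, x, χ, y, hR, hx, hxy, hχ, hy => by
    have hχR : χ ∉ colors R := fun h => hχ (mem_usedColors.2 (Or.inl h))
    refine ⟨insert (χ, x, y) R, hR.insert hxy hχR hx hy,
      card_insert_of_notMem fun h => hχR (mem_colors.2 ⟨_, h, rfl⟩), by simp, by simp [chainEnd],
      by simp, ?_⟩
    rw [colors_insert]
    exact insert_subset_insert χ subset_union_left
  | t :: cs, R, x, χ, y, hR, ⟨⟨c, hlink⟩, htF, htc, htz, hrest⟩, hxy, hχ, hy => by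
    set R₁ := R.erase (c, x, t.2.2)
    have hR₁R : R₁ ⊆ R := erase_subset ..
    have hlefts₁ : lefts R₁ = (lefts R).erase x := hR.lefts_erase hlink
    have hrights₁ : rights R₁ = (rights R).erase t.2.2 := hR.rights_erase hlink
    have hxR : x ∈ lefts R := mem_lefts.2 ⟨_, hlink, rfl⟩
    have htR : t.2.2 ∈ rights R := mem_rights.2 ⟨_, hlink, rfl⟩
    obtain ⟨S₁, hS₁, hcard₁, hrights, hlefts, -, hcolors⟩ :=
      exists_augment (hR.mono hR₁R) (hrest.erase htz) htF
        (fun h => htc (usedColors_mono hR₁R (List.Subset.refl _) h)) (by simp [hrights₁])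
    have hend : chainEnd cs t.2.1 ≠ x := fun h => hrest.chainEnd_notMem_lefts (h ▸ hxR)
    have hxS₁ : x ∉ lefts S₁ := fun h => by
      simpa [hlefts₁, Ne.symm hend] using hlefts h
    have hyS₁ : y ∉ rights S₁ := by rwa [hrights, hrights₁, insert_erase htR]
    have hχS₁ : χ ∉ colors S₁ := fun h =>
      hχ (insert_usedColors_subset hR₁R t cs (hcolors h))
    refine ⟨insert (χ, x, y) S₁, hS₁.insert hxy hχS₁ hxS₁ hyS₁, ?_, ?_, ?_, by simp, ?_⟩
    · rw [card_insert_of_notMem fun h => hχS₁ (mem_colors.2 ⟨_, h, rfl⟩), hcard₁,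
        card_erase_of_mem hlink, Nat.sub_add_cancel (card_pos.2 ⟨_, hlink⟩)]
    · rw [rights_insert, hrights, hrights₁, insert_erase htR]
    · rw [lefts_insert]
      exact insert_subset (mem_insert_of_mem hxR)
        (hlefts.trans (insert_subset_insert _ (image_subset_image hR₁R)))
    · rw [colors_insert]
      exact insert_subset_insert χ (hcolors.trans (insert_usedColors_subset hR₁R t cs))

end IsAltChain

structure IsMaxRainbowMatching (F : Fin n → Finset (α × β)) (R : Finset (Fin n × α × β)) : Prop
    extends IsRainbowMatching F R where
  card_le : ∀ S, IsRainbowMatching F S → S.card ≤ R.card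

lemma exists_isMaxRainbowMatching (F : Fin n → Finset (α × β)) :
    ∃ R, IsMaxRainbowMatching F R := by
  classical
  let P m := ∃ S, IsRainbowMatching F S ∧ S.card = m
  obtain ⟨R, hR, hcard⟩ : P (Nat.findGreatest P n) :=
    Nat.findGreatest_spec (Nat.zero_le n) ⟨∅, .empty, rfl⟩
  refine ⟨R, hR, fun S hS => hcard ▸ Nat.le_findGreatest ?_ ⟨S, hS, rfl⟩⟩
  simpa [hS.card_colors] using card_le_univ (colors S)

def Reachable [DecidableEq α] (R : Finset (Fin n × α × β)) (Z : List β) (x : α) : Prop :=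
  x ∉ lefts R ∨ ∃ q ∈ R, q.2.1 = x ∧ q.2.2 ∈ Z

lemma IsAltChain.reachable [DecidableEq α] {R : Finset (Fin n × α × β)} :
    ∀ {cs : List (Fin n × α × β)} {x : α}, IsAltChain F R x cs → Reachable R (cs.map (·.2.2)) x
  | [], _, h => Or.inl h
  | _ :: _, _, ⟨⟨_, hlink⟩, _⟩ => Or.inr ⟨_, hlink, rfl, List.mem_cons_self ..⟩

variable [DecidableEq α] [DecidableEq β]

def PairwiseMatchable (F : Fin n → Finset (α × β)) (k : ℕ) : Prop :=
  ∀ i j, i ≠ j → ∃ N ⊆ F i ∪ F j, IsBipMatching N ∧ N.card = k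

lemma PairwiseMatchable.le_card {k : ℕ} (hP : PairwiseMatchable F k) {i j : Fin n} (hij : i ≠ j)
    {B : Finset β} (hB : ∀ e ∈ F i ∪ F j, e.2 ∈ B) : k ≤ B.card := by
  obtain ⟨N, hNF, hN, rfl⟩ := hP i j hij
  rw [← card_image_of_injOn hN.2]
  exact card_le_card fun y hy => by
    obtain ⟨e, he, rfl⟩ := mem_image.1 hy
    exact hB e (hNF he)

/-- An alternating forest for `R`, listed newest entry first. -/
def IsForest (F : Fin n → Finset (α × β)) (R : Finset (Fin n × α × β)) :
    List (Fin n × α × β) → Prop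
  | [] => True
  | t :: L => t.2 ∈ F t.1 ∧ t.1 ∉ usedColors R L ∧ t.2.2 ∈ rights R ∧ t.2.2 ∉ L.map (·.2.2) ∧
      Reachable R (L.map (·.2.2)) t.2.1 ∧ IsForest F R L

lemma reachable_of_subset {R : Finset (Fin n × α × β)} {Z : List β}
    (hZ : ∀ y ∈ rights R, y ∈ Z) (x : α) : Reachable R Z x := by
  by_cases hx : x ∈ lefts R
  · obtain ⟨q, hq, rfl⟩ := mem_lefts.1 hx
    exact Or.inr ⟨q, hq, rfl, hZ _ (mem_rights.2 ⟨q, hq, rfl⟩)⟩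
  · exact Or.inl hx

lemma IsAltChain.isForest {R : Finset (Fin n × α × β)} :
    ∀ {cs : List (Fin n × α × β)} {x : α}, IsAltChain F R x cs → IsForest F R cs
  | [], _, _ => trivial
  | _ :: cs, _, ⟨⟨_, hlink⟩, htF, htc, htz, hrest⟩ =>
    ⟨htF, htc, mem_rights.2 ⟨_, hlink, rfl⟩, htz, hrest.reachable, hrest.isForest (cs := cs)⟩

namespace IsForest

variable {R : Finset (Fin n × α × β)}

lemma nodup : ∀ {L : List (Fin n × α × β)}, IsForest F R L → (L.map (·.2.2)).Nodup
  | [], _ => List.nodup_nil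
  | _ :: _, ⟨_, _, _, htz, _, hL⟩ => List.nodup_cons.2 ⟨htz, hL.nodup⟩

lemma mem_rights_of_mem :
    ∀ {L : List (Fin n × α × β)}, IsForest F R L → ∀ y ∈ L.map (·.2.2), y ∈ rights R
  | _ :: _, ⟨_, _, htR, _, _, hL⟩, _, hy => by
    rcases List.mem_cons.1 hy with rfl | hy
    exacts [htR, hL.mem_rights_of_mem _ hy]

lemma card_toFinset {L : List (Fin n × α × β)} (hL : IsForest F R L) :
    (L.map (·.2.2)).toFinset.card = L.length := by
  rw [List.toFinset_card_of_nodup hL.nodup, List.length_map]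

lemma toFinset_subset {L : List (Fin n × α × β)} (hL : IsForest F R L) :
    (L.map (·.2.2)).toFinset ⊆ rights R :=
  fun y hy => hL.mem_rights_of_mem y (List.mem_toFinset.1 hy)

lemma length_le {L : List (Fin n × α × β)} (hR : IsRainbowMatching F R) (hL : IsForest F R L) :
    L.length ≤ R.card :=
  hL.card_toFinset ▸ hR.card_rights ▸ card_le_card hL.toFinset_subset

lemma exists_isAltChain : ∀ {L : List (Fin n × α × β)}, IsForest F R L →
    ∀ {x : α}, Reachable R (L.map (·.2.2)) x → ∃ cs, IsAltChain F R x cs ∧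
      cs.map Prod.fst ⊆ L.map Prod.fst ∧ cs.map (·.2.2) ⊆ L.map (·.2.2)
  | _, _, _, Or.inl hx => ⟨[], hx, by simp, by simp⟩
  | t :: L, ⟨htF, htc, _, htz, htreach, hL⟩, _, Or.inr ⟨(c, _, z), hq, rfl, hqz⟩ => by
    rcases List.mem_cons.1 hqz with rfl | hqz
    · obtain ⟨cs, hcs, hcsc, hcsz⟩ := exists_isAltChain hL htreach
      exact ⟨t :: cs, ⟨⟨c, hq⟩, htF, fun h => htc (usedColors_mono subset_rfl hcsc h),
        fun h => htz (hcsz h), hcs⟩, List.cons_subset_cons _ hcsc, List.cons_subset_cons _ hcsz⟩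
    · obtain ⟨cs, hcs, hcsc, hcsz⟩ := exists_isAltChain hL (Or.inr ⟨_, hq, rfl, hqz⟩)
      exact ⟨cs, hcs, List.Subset.trans hcsc (List.subset_cons_self ..),
        List.Subset.trans hcsz (List.subset_cons_self ..)⟩

variable {L : List (Fin n × α × β)}

/-- Otherwise the chain back to `x` followed by the edge `(x, y)` would augment `R`. -/
lemma mem_rights_of_reachable (hR : IsMaxRainbowMatching F R) (hL : IsForest F R L)
    {χ : Fin n} {x : α} {y : β} (hxy : (x, y) ∈ F χ) (hχ : χ ∉ usedColors R L)
    (hx : Reachable R (L.map (·.2.2)) x) : y ∈ rights R := by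
  by_contra hy
  obtain ⟨cs, hcs, hcsc, -⟩ := hL.exists_isAltChain hx
  obtain ⟨S, hS, hcard, -⟩ := hcs.exists_augment hR.toIsRainbowMatching hxy
    (fun h => hχ (usedColors_mono subset_rfl hcsc h)) hy
  have := hR.card_le S hS
  omega

/-- The unreachable left ends of `N` are matched by `R` outside the right ends of `L`. -/
lemma exists_reachable_subset (hR : IsRainbowMatching F R) (hL : IsForest F R L)
    {N : Finset (α × β)} (hN : IsBipMatching N) :
    ∃ G ⊆ N, (∀ e ∈ G, Reachable R (L.map (·.2.2)) e.1) ∧ L.length + N.card ≤ G.card + R.card := by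
  classical
  set Z := L.map (·.2.2)
  set Rout := R.filter (·.2.2 ∉ Z)
  have hbad : (N.filter (¬ Reachable R Z ·.1)).image Prod.fst ⊆ lefts Rout := by
    intro x hx
    obtain ⟨e, he, rfl⟩ := mem_image.1 hx
    simp only [Reachable, not_or, not_not, not_exists, not_and, mem_filter] at he
    obtain ⟨q, hq, hqx⟩ := mem_lefts.1 he.2.1
    exact mem_lefts.2 ⟨q, mem_filter.2 ⟨hq, he.2.2 q hq hqx⟩, hqx⟩
  have hout : rights Rout ⊆ rights R \ Z.toFinset := by
    intro y hy
    obtain ⟨q, hq, rfl⟩ := mem_rights.1 hy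
    obtain ⟨hqR, hqZ⟩ := mem_filter.1 hq
    exact mem_sdiff.2 ⟨mem_rights.2 ⟨q, hqR, rfl⟩, by simpa using hqZ⟩
  have hcard : (N.filter (¬ Reachable R Z ·.1)).card + L.length ≤ R.card := calc
    _ = ((N.filter (¬ Reachable R Z ·.1)).image Prod.fst).card + L.length := by
      rw [card_image_of_injOn (hN.1.mono (coe_subset.2 (filter_subset _ _)))]
    _ ≤ Rout.card + L.length := by
      have := (card_le_card hbad).trans card_image_le
      omega
    _ = (rights Rout).card + L.length := by rw [(hR.mono (filter_subset _ _)).card_rights]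
    _ ≤ (rights R \ Z.toFinset).card + L.length := by
      have := card_le_card hout
      omega
    _ = R.card := by
      rw [card_sdiff_of_subset hL.toFinset_subset, hL.card_toFinset, hR.card_rights,
        Nat.sub_add_cancel (hL.length_le hR)]
  refine ⟨N.filter (Reachable R Z ·.1), filter_subset _ _, fun e he => (mem_filter.1 he).2, ?_⟩
  have := card_filter_add_card_filter_not (s := N) (Reachable R Z ·.1)
  omega

lemma exists_notMem_usedColors (hR : IsRainbowMatching F R) (hL : IsForest F R L)
    (hn : 2 * R.card < n) : ∃ c, c ∉ usedColors R L :=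
  exists_notMem_of_card_lt <| (card_usedColors_le R L).trans_lt <| by
    have := hL.length_le hR
    omega

lemma mem_rights_of_full (hR : IsMaxRainbowMatching F R) (hL : IsForest F R L)
    (hfull : ∀ y ∈ rights R, y ∈ L.map (·.2.2)) {c : Fin n} (hc : c ∉ usedColors R L)
    {e : α × β} (he : e ∈ F c) : e.2 ∈ rights R :=
  hL.mem_rights_of_reachable hR he hc (reachable_of_subset hfull _)

section Growth

variable {k : ℕ} (hR : IsMaxRainbowMatching F R) (hP : PairwiseMatchable F k)
  (hk : R.card < k) (hn : 2 * R.card < n)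
include hR hP hk hn

/-- Two unused colors give a matching of size `k`; more than `L.length` of its edges start at
reachable vertices, so they end in `rights R`, and one of them ends outside `L`. -/
lemma exists_cons (hL : IsForest F R L) (hlen : L.length < R.card) :
    ∃ t, IsForest F R (t :: L) := by
  have hused := card_usedColors_le R L
  obtain ⟨d₁, hd₁⟩ := exists_notMem_of_card_lt (s := usedColors R L) (by omega)
  obtain ⟨d₂, hd₂⟩ := exists_notMem_of_card_lt (s := insert d₁ (usedColors R L))
    ((card_insert_le _ _).trans_lt (by omega))
  rw [mem_insert, not_or] at hd₂
  obtain ⟨N, hNF, hN, hNcard⟩ := hP d₁ d₂ (Ne.symm hd₂.1)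
  obtain ⟨G, hGN, hGreach, hGcard⟩ := hL.exists_reachable_subset hR.toIsRainbowMatching hN
  have hclean : ∀ e ∈ G, ∃ c ∉ usedColors R L, e ∈ F c := fun e he =>
    (mem_union.1 (hNF (hGN he))).elim (⟨d₁, hd₁, ·⟩) (⟨d₂, hd₂.2, ·⟩)
  have hGrights : ∀ e ∈ G, e.2 ∈ rights R := fun e he => by
    obtain ⟨c, hc, heF⟩ := hclean e he
    exact hL.mem_rights_of_reachable hR heF hc (hGreach e he)
  obtain ⟨y, hyG, hyL⟩ := exists_mem_notMem_of_card_lt_card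
    (s := (L.map (·.2.2)).toFinset) (t := G.image Prod.snd) <| by
      rw [hL.card_toFinset, card_image_of_injOn (hN.2.mono (coe_subset.2 hGN))]
      omega
  obtain ⟨e, he, rfl⟩ := mem_image.1 hyG
  obtain ⟨c, hc, heF⟩ := hclean e he
  exact ⟨(c, e), heF, hc, hGrights e he, by simpa using hyL, hGreach e he, hL⟩

lemma exists_full {L : List (Fin n × α × β)} (hL : IsForest F R L) :
    ∃ L', IsForest F R L' ∧ L <:+ L' ∧ ∀ y ∈ rights R, y ∈ L'.map (·.2.2) := by
  by_cases hlen : L.length < R.card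
  · obtain ⟨t, ht⟩ := hL.exists_cons hR hP hk hn hlen
    obtain ⟨L', hL', hsuf, hfull⟩ := ht.exists_full
    exact ⟨L', hL', (List.suffix_cons t L).trans hsuf, hfull⟩
  · have := eq_of_subset_of_card_le hL.toFinset_subset (by
      rw [hL.card_toFinset, hR.card_rights]
      omega)
    exact ⟨L, hL, List.suffix_refl L, fun y hy => List.mem_toFinset.1 (this ▸ hy)⟩
termination_by R.card - L.length

/-- Some other color is unused, so its edges also end in `rights R`; then the matching of size
`k > R.card` in the union of the two classes does not fit into `rights R`. -/
lemma false_of_saturated (hL : IsForest F R L) (hfull : ∀ y ∈ rights R, y ∈ L.map (·.2.2))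
    {d : Fin n} (hd : d ∈ usedColors R L) (hsat : ∀ e ∈ F d, e.2 ∈ rights R) : False := by
  obtain ⟨c, hc⟩ := hL.exists_notMem_usedColors hR.toIsRainbowMatching hn
  have hdc : d ≠ c := by
    rintro rfl
    exact hc hd
  have := hP.le_card hdc fun e he =>
    (mem_union.1 he).elim (hsat e) (hL.mem_rights_of_full hR hfull hc)
  rw [hR.card_rights] at this
  omega

end Growth

end IsForest

/-- The edge `(x, y)` closes an alternating cycle through `y`; swapping along it keeps the size
and the right vertices of `R`. -/
lemma IsAltChain.exists_rotate {R : Finset (Fin n × α × β)} {cs : List (Fin n × α × β)}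
    {x : α} {y : β} {d : Fin n} (hR : IsMaxRainbowMatching F R) (hcs : IsAltChain F R x cs)
    (hxy : (x, y) ∈ F d) (hd : d ∉ usedColors R cs) (hy : y ∈ cs.map (·.2.2)) :
    ∃ R', IsMaxRainbowMatching F R' ∧ rights R' = rights R ∧ d ∈ colors R' := by
  obtain ⟨t, ht, rfl⟩ := List.mem_map.1 hy
  obtain ⟨pre, post, rfl⟩ := List.append_of_mem ht
  obtain ⟨q, hq, hqt, hpre⟩ := hcs.exists_erase_of_append hR.toIsRainbowMatching
  have hrights : rights (R.erase q) = (rights R).erase t.2.2 := hqt ▸ hR.rights_erase hq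
  obtain ⟨S, hS, hcard, hSrights, -, hdS, -⟩ := hpre.exists_augment (hR.mono (erase_subset _ _))
    hxy (fun h => hd (usedColors_mono (erase_subset _ _) (by simp) h)) (by simp [hrights])
  have hcardS : S.card = R.card := by
    rw [hcard, card_erase_of_mem hq, Nat.sub_add_cancel (card_pos.2 ⟨q, hq⟩)]
  refine ⟨S, ⟨hS, fun T hT => hcardS ▸ hR.card_le T hT⟩, ?_, hdS⟩
  rw [hSrights, hrights, insert_erase (hqt ▸ mem_rights.2 ⟨q, hq, rfl⟩)]

theorem IsMaxRainbowMatching.le_card {R : Finset (Fin n × α × β)} {k : ℕ}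
    (hR : IsMaxRainbowMatching F R) (hP : PairwiseMatchable F k) (hne : ∀ i, (F i).Nonempty)
    (hn : 2 * k ≤ n + 1) : k ≤ R.card := by
  by_contra! hk
  have hn' : 2 * R.card < n := by omega
  obtain ⟨L, hL, -, hfull⟩ := IsForest.exists_full hR hP hk hn' (L := []) trivial
  obtain ⟨d, hd⟩ := hL.exists_notMem_usedColors hR.toIsRainbowMatching hn'
  have hsat : ∀ e ∈ F d, e.2 ∈ rights R := fun e he => hL.mem_rights_of_full hR hfull hd he
  obtain ⟨e, he⟩ := hne d
  obtain ⟨cs, hcs, hcsc, -⟩ := hL.exists_isAltChain (reachable_of_subset hfull e.1)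
  have hdcs : d ∉ usedColors R cs := fun h => hd (usedColors_mono subset_rfl hcsc h)
  by_cases hy : e.2 ∈ cs.map (·.2.2)
  · obtain ⟨R', hR', hrights, hdR'⟩ := hcs.exists_rotate hR he hdcs hy
    have hcard : R'.card = R.card := by rw [← hR'.card_rights, hrights, hR.card_rights]
    rw [← hcard] at hk hn'
    obtain ⟨L', hL', -, hfull'⟩ := IsForest.exists_full hR' hP hk hn' (L := []) trivial
    exact hL'.false_of_saturated hR' hP hk hn' hfull' (mem_usedColors.2 (Or.inl hdR'))
      (hrights ▸ hsat)
  · have hseed : IsForest F R ((d, e) :: cs) :=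
      ⟨he, hdcs, hsat e he, hy, hcs.reachable, hcs.isForest⟩
    obtain ⟨L', hL', hsuf, hfull'⟩ := hseed.exists_full hR hP hk hn'
    exact hL'.false_of_saturated hR hP hk hn' hfull'
      (mem_usedColors.2 (Or.inr (List.mem_map.2 ⟨_, hsuf.subset (List.mem_cons_self ..), rfl⟩)))
      hsat

lemma IsRainbowMatching.exists_choice {S : Finset (Fin n × α × β)} (hS : IsRainbowMatching F S)
    (hne : ∀ i, (F i).Nonempty) :
    ∃ (I : Finset (Fin n)) (e : Fin n → α × β), I.card = S.card ∧ Set.InjOn e ↑I ∧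
      (∀ i ∈ I, e i ∈ F i) ∧ IsBipMatching (I.image e) := by
  obtain ⟨e, heF, heS⟩ : ∃ e : Fin n → α × β, (∀ i, e i ∈ F i) ∧ ∀ p ∈ S, e p.1 = p.2 := by
    refine ⟨fun i => if h : ∃ p ∈ S, p.1 = i then h.choose.2 else (hne i).choose,
      fun i => ?_, fun p hp => ?_⟩
    · dsimp only
      split_ifs with h
      · have := hS.mem _ h.choose_spec.1
        rwa [h.choose_spec.2] at this
      · exact (hne i).choose_spec
    · have h : ∃ q ∈ S, q.1 = p.1 := ⟨p, hp, rfl⟩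
      dsimp only
      rw [dif_pos h, hS.injOn_color h.choose_spec.1 hp h.choose_spec.2]
  have hinj : Set.InjOn (·.2) (S : Set (Fin n × α × β)) := fun p hp q hq h =>
    hS.injOn_left hp hq (congrArg Prod.fst h)
  have himage : (colors S).image e = S.image (·.2) := by
    rw [colors, image_image]
    exact image_congr fun p hp => heS p hp
  refine ⟨colors S, e, hS.card_colors, ?_, fun i _ => heF i, ?_, ?_⟩
  · rw [colors, coe_image]
    exact Set.InjOn.image_of_comp fun p hp q hq h =>
      hinj hp hq (by simpa [heS p hp, heS q hq] using h)
  · rw [himage, coe_image]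
    exact Set.InjOn.image_of_comp hS.injOn_left
  · rw [himage, coe_image]
    exact Set.InjOn.image_of_comp hS.injOn_right

lemma pairwiseMatchable_of_lt {k : ℕ}
    (h : ∀ i j, i < j → ∃ N : Finset (α × β), N ⊆ F i ∪ F j ∧ IsBipMatching N ∧ N.card = k) :
    PairwiseMatchable F k := fun i j hij => by
  rcases hij.lt_or_gt with hij | hij
  · exact h i j hij
  · obtain ⟨N, hNF, hN⟩ := h j i hij
    exact ⟨N, union_comm (F i) _ ▸ hNF, hN⟩

end CooperativeDrisko

open CooperativeDrisko in
theorem cooperative_drisko_general {α β : Type*} [DecidableEq α] [DecidableEq β]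
    {k : ℕ} (F : Fin (2 * k - 1) → Finset (α × β))
    (hne : ∀ i, (F i).Nonempty)
    (hpair : ∀ i j, i < j →
      ∃ N : Finset (α × β), N ⊆ F i ∪ F j ∧ IsBipMatching N ∧ N.card = k) :
    ∃ (I : Finset (Fin (2 * k - 1))) (e : Fin (2 * k - 1) → α × β),
      I.card = k ∧ Set.InjOn e ↑I ∧ (∀ i ∈ I, e i ∈ F i) ∧
      IsBipMatching (I.image e) := by
  obtain ⟨R, hR⟩ := exists_isMaxRainbowMatching F
  obtain ⟨S, hSR, hS⟩ :=
    Finset.exists_subset_card_eq (hR.le_card (pairwiseMatchable_of_lt hpair) hne (by omega))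
  obtain ⟨I, e, hI, he⟩ := (hR.mono hSR).exists_choice hne
  exact ⟨I, e, hI.trans hS, he⟩

/-- Cooperative Drisko: if the edge set of a bipartite graph is partitioned
into `2k-1` nonempty sets such that the union of every two of them contains a
matching of size `k`, then there is a rainbow matching of size `k`. -/
theorem cooperative_drisko {α β : Type*} [DecidableEq α] [DecidableEq β]
    {k : ℕ} (F : Fin (2 * k - 1) → Finset (α × β))
    (hne : ∀ i, (F i).Nonempty)
    (hdisj : ∀ i j, i ≠ j → Disjoint (F i) (F j))
    (hpair : ∀ i j, i < j →
      ∃ N : Finset (α × β), N ⊆ F i ∪ F j ∧ IsBipMatching N ∧ N.card = k) :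
    ∃ (I : Finset (Fin (2 * k - 1))) (e : Fin (2 * k - 1) → α × β),
      I.card = k ∧ Set.InjOn e ↑I ∧ (∀ i ∈ I, e i ∈ F i) ∧
      IsBipMatching (I.image e) :=
  cooperative_drisko_general F hne hpair
end

section
/- For n odd, there exist n-1 (families of edge sets of) odd cycles on a vertex set of size n with no rainbow odd cycle: taking A₁ = ... = A_{n-1} to each be the edge set of the same Hamilton cycle of odd length n, no rainbow odd cycle exists, i.e., no choice of distinct edges eᵢ ∈ Aᵢ for i in some I ⊆ [n-1] forms the edge set of an odd cycle. -/
/-!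
The edges of a rainbow cycle are at most `n - 1` distinct edges of the Hamilton cycle
`0, 1, …, n - 1`, so they form a nonempty proper subset `E` of its `n` edges. Walking along the
Hamilton cycle from an edge in `E` to one outside it, we meet an edge `s(k, k + 1) ∈ E` followed
by `s(k + 1, k + 2) ∉ E`; then `k + 1` lies on only one edge of `E`, whereas every vertex of a
cycle lies on two of its edges.
-/

/-- `E` is exactly the edge set of a cycle of length `m`: there are `m`
distinct vertices `v 0, …, v (m-1)` with `E` consisting of the edges of the
cyclic sequence. -/
def IsCycleEdgeSet {V : Type*} [DecidableEq V] (m : ℕ) (E : Finset (Sym2 V)) : Prop :=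
  3 ≤ m ∧ ∃ v : ℕ → V, (∀ i < m, ∀ j < m, v i = v j → i = j) ∧
    E = (Finset.range m).image (fun i => s(v i, v ((i + 1) % m)))

theorem Nat.succ_mod_cases {i m : ℕ} (h : i < m) :
    (i + 1) % m = i + 1 ∧ i + 1 < m ∨ (i + 1) % m = 0 ∧ i + 1 = m := by
  rcases (Nat.succ_le_of_lt h).lt_or_eq with h' | h'
  · exact .inl ⟨Nat.mod_eq_of_lt h', h'⟩
  · exact .inr ⟨h' ▸ Nat.mod_self _, h'⟩

theorem Nat.exists_succ_mod_eq {j m : ℕ} (h : j < m) : ∃ p < m, (p + 1) % m = j := by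
  rcases j with _ | j
  · exact ⟨m - 1, by omega, by rw [Nat.sub_add_cancel (by omega), Nat.mod_self]⟩
  · exact ⟨j, by omega, Nat.mod_eq_of_lt h⟩

theorem eq_of_mk_succ_mod_eq {V : Type*} {m : ℕ} {v : ℕ → V} (hm : 3 ≤ m)
    (hv : ∀ i < m, ∀ j < m, v i = v j → i = j) {i j : ℕ} (hi : i < m) (hj : j < m)
    (h : s(v i, v ((i + 1) % m)) = s(v j, v ((j + 1) % m))) : i = j := by
  rcases Sym2.eq_iff.mp h with ⟨h₁, -⟩ | ⟨h₁, h₂⟩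
  · exact hv i hi j hj h₁
  · have hi' := hv _ hi _ (Nat.mod_lt _ (by omega)) h₁
    have hj' := hv _ (Nat.mod_lt _ (by omega)) _ hj h₂
    rcases Nat.succ_mod_cases hi with hi₁ | hi₁ <;> rcases Nat.succ_mod_cases hj with hj₁ | hj₁ <;>
      omega

namespace IsCycleEdgeSet

variable {V : Type*} [DecidableEq V] {m : ℕ} {E : Finset (Sym2 V)}

theorem card_eq (h : IsCycleEdgeSet m E) : E.card = m := by
  obtain ⟨hm, v, hv, rfl⟩ := h
  rw [Finset.card_image_of_injOn, Finset.card_range]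
  intro i hi j hj hij
  exact eq_of_mk_succ_mod_eq hm hv (Finset.mem_range.mp hi) (Finset.mem_range.mp hj) hij

theorem exists_ne_mem_of_mem (h : IsCycleEdgeSet m E) {x : Sym2 V} (hx : x ∈ E) {a : V}
    (ha : a ∈ x) : ∃ y ∈ E, a ∈ y ∧ y ≠ x := by
  obtain ⟨hm, v, hv, rfl⟩ := h
  obtain ⟨i, hi, rfl⟩ := Finset.mem_image.mp hx
  rw [Finset.mem_range] at hi
  obtain ⟨j, hj, rfl⟩ : ∃ j < m, v j = a := by
    rcases Sym2.mem_iff.mp ha with rfl | rfl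
    · exact ⟨i, hi, rfl⟩
    · exact ⟨_, Nat.mod_lt _ (by omega), rfl⟩
  obtain ⟨p, hp, hpj⟩ := Nat.exists_succ_mod_eq hj
  have hne : s(v j, v ((j + 1) % m)) ≠ s(v p, v ((p + 1) % m)) := by
    intro heq
    have := eq_of_mk_succ_mod_eq hm hv hj hp heq
    subst this
    rcases Nat.succ_mod_cases hp with h | h <;> omega
  have hmem : ∀ k < m, s(v k, v ((k + 1) % m)) ∈
      (Finset.range m).image (fun i => s(v i, v ((i + 1) % m))) :=
    fun k hk => Finset.mem_image_of_mem _ (Finset.mem_range.mpr hk)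
  by_cases hjx : s(v j, v ((j + 1) % m)) = s(v i, v ((i + 1) % m))
  · exact ⟨_, hmem p hp, hpj ▸ Sym2.mem_mk_right _ _, hjx ▸ hne.symm⟩
  · exact ⟨_, hmem j hj, Sym2.mem_mk_left _ _, hjx⟩

end IsCycleEdgeSet

section TranslateEdges

variable {G : Type*} [AddGroup G] {o : G}

theorem injective_mk_add (ho : o + o ≠ 0) : Function.Injective fun k : G => s(k, k + o) := by
  intro a b h
  rcases Sym2.eq_iff.mp h with ⟨h₁, -⟩ | ⟨rfl, h₂⟩
  · exact h₁
  · exact absurd (by simpa [add_assoc] using h₂) ho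

theorem exists_mk_add_mem_and_not_mem {E : Set (Sym2 G)} (hgen : ∀ b : G, ∃ t : ℕ, t • o = b)
    {a b : G} (ha : s(a, a + o) ∈ E) (hb : s(b, b + o) ∉ E) :
    ∃ k, s(k, k + o) ∈ E ∧ s(k + o, k + o + o) ∉ E := by
  by_contra! hstep
  have hall : ∀ t : ℕ, s(a + t • o, a + t • o + o) ∈ E := by
    intro t
    induction t with
    | zero => simpa using ha
    | succ t ih => simpa [succ_nsmul, add_assoc] using hstep _ ih
  obtain ⟨t, ht⟩ := hgen (-a + b)
  exact hb (by simpa [ht] using hall t)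

theorem eq_of_mem_of_mk_add_not_mem {E : Set (Sym2 G)}
    (hE : E ⊆ Set.range fun k => s(k, k + o)) {k : G}
    (hk : s(k + o, k + o + o) ∉ E) {x : Sym2 G} (hx : x ∈ E) (hkx : k + o ∈ x) :
    x = s(k, k + o) := by
  obtain ⟨c, rfl⟩ := hE hx
  rcases Sym2.mem_iff.mp hkx with h | h
  · exact absurd (h ▸ hx) hk
  · rw [add_right_cancel h]

theorem exists_pendant_of_subset_range_mk_add {E : Set (Sym2 G)}
    (hgen : ∀ b : G, ∃ t : ℕ, t • o = b)
    (hE : E ⊆ Set.range fun k => s(k, k + o)) (hne : E.Nonempty) {b : G} (hb : s(b, b + o) ∉ E) :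
    ∃ x ∈ E, ∃ a ∈ x, ∀ y ∈ E, a ∈ y → y = x := by
  obtain ⟨x, hx⟩ := hne
  obtain ⟨a, rfl⟩ := hE hx
  obtain ⟨k, hk, hk'⟩ := exists_mk_add_mem_and_not_mem hgen hx hb
  exact ⟨_, hk, k + o, Sym2.mem_mk_right _ _, fun y hy => eq_of_mem_of_mk_add_not_mem hE hk' hy⟩

theorem not_isCycleEdgeSet_of_subset_range_mk_add [DecidableEq G] {m : ℕ} {E : Finset (Sym2 G)}
    (hgen : ∀ b : G, ∃ t : ℕ, t • o = b) (hE : ↑E ⊆ Set.range fun k => s(k, k + o)) {b : G}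
    (hb : s(b, b + o) ∉ E) : ¬ IsCycleEdgeSet m E := by
  intro h
  have hne : E.Nonempty := Finset.card_pos.mp (by have := h.1; rw [h.card_eq]; omega)
  obtain ⟨x, hx, a, ha, huniq⟩ :=
    exists_pendant_of_subset_range_mk_add hgen hE (Finset.coe_nonempty.mpr hne) hb
  obtain ⟨y, hy, hay, hyx⟩ := h.exists_ne_mem_of_mem hx ha
  exact hyx (huniq y hy hay)

end TranslateEdges

theorem Fin.one_add_one_ne_zero {n : ℕ} [NeZero n] (hn : 3 ≤ n) : (1 + 1 : Fin n) ≠ 0 := by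
  rw [Ne, Fin.ext_iff, Fin.val_add, Fin.val_one', Fin.val_zero, Nat.mod_eq_of_lt (by omega : 1 < n),
    Nat.mod_eq_of_lt (by omega)]
  omega

/-- For `n` odd, the `n-1` copies of (the edge set of) a Hamilton cycle of odd
length `n` have no rainbow odd cycle. -/
theorem no_rainbow_odd_cycle_hamilton {n : ℕ} (hn : 3 ≤ n)
    (A : Fin (n - 1) → Finset (Sym2 (Fin n)))
    (hA : ∀ i, A i =
      Finset.univ.image (fun i : Fin n => s(i, i + (⟨1, by omega⟩ : Fin n)))) :
    ¬ ∃ (I : Finset (Fin (n - 1))) (e : Fin (n - 1) → Sym2 (Fin n)),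
        Set.InjOn e ↑I ∧ (∀ i ∈ I, e i ∈ A i) ∧
        ∃ m, Odd m ∧ IsCycleEdgeSet m (I.image e) := by
  rintro ⟨I, e, -, he, m, -, hcycle⟩
  have : NeZero n := ⟨by omega⟩
  simp only [← Fin.one_eq_mk_of_lt (by omega : 1 < n)] at hA
  set H := Finset.univ.image fun k : Fin n => s(k, k + 1)
  have hsub : I.image e ⊆ H := Finset.image_subset_iff.mpr fun i hi => hA i ▸ he i hi
  have hlt : (I.image e).card < H.card := calc
    _ ≤ I.card := Finset.card_image_le
    _ ≤ n - 1 := by simpa using Finset.card_le_univ I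
    _ < n := by omega
    _ = H.card := by
      rw [Finset.card_image_of_injective _ (injective_mk_add (Fin.one_add_one_ne_zero hn)),
        Finset.card_univ, Fintype.card_fin]
  obtain ⟨_, hbH, hb⟩ := Finset.exists_mem_notMem_of_card_lt_card hlt
  obtain ⟨b, -, rfl⟩ := Finset.mem_image.mp hbH
  refine not_isCycleEdgeSet_of_subset_range_mk_add (fun b => ⟨b.val, ?_⟩) ?_ hb hcycle
  · open Fin.NatCast in simp
  · simpa [H] using Finset.coe_subset.mpr hsub
end

section
/- Let k ≥ 2 and d ≥ 1. Let H be a k-uniform hypergraph with maximum vertex degree at most d, and let V₁, ..., Vₘ be pairwise disjoint sets of vertices of H, each of size at least ⌈k·e·d^{1/(k-1)}⌉. Then there exist vertices vᵢ ∈ Vᵢ (one from each part) such that {v₁, ..., vₘ} is independent in H. -/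
/-!
Choose one vertex independently and uniformly from each part, after shrinking every part to
exactly `n = ⌈k e d^(1/(k-1))⌉` vertices. For an edge `e`, the bad event "every vertex of `e` is
chosen" only involves the (at most `k`) parts that `e` meets; it has probability at most `n⁻ᵏ`,
and it is independent of any combination of the bad events of edges meeting none of those parts.
At most `k n d - 1` other edges meet those parts, and `e · n⁻ᵏ · k n d ≤ 1` by the choice of `n`
(`n ^ (k - 1) ≥ (k e) ^ (k - 1) d ≥ k e d`), so the symmetric Lovász Local Lemma yields a choice
avoiding all bad events.
-/

open Finset Fintype Function

lemma inv_exp_mul_le (D : ℕ) :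
    (Real.exp 1 * (D + 1))⁻¹ ≤ (D + 2 : ℝ)⁻¹ * (1 - (D + 2 : ℝ)⁻¹) ^ D := by
  have hD : (0 : ℝ) < D + 1 := by positivity
  have he := Real.one_add_inv_pow_le_exp (n := D + 1)
  push_cast at he
  have h1 : (1 : ℝ) - (D + 2 : ℝ)⁻¹ = (1 + (D + 1 : ℝ)⁻¹)⁻¹ := by
    field_simp; ring
  have h2 : (D + 1 : ℝ) * (1 + (D + 1 : ℝ)⁻¹) = D + 2 := by
    field_simp; ring
  rw [h1, inv_pow, ← mul_inv, ← h2, mul_assoc, ← pow_succ']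
  exact inv_anti₀ (by positivity) ((mul_le_mul_of_nonneg_left he hD.le).trans_eq (mul_comm _ _))

lemma exp_one_mul_le_pow {k : ℕ} {d n : ℝ} (hk : 2 ≤ k) (hd : 0 ≤ d)
    (hn : k * Real.exp 1 * d ^ ((1 : ℝ) / (k - 1 : ℝ)) ≤ n) :
    Real.exp 1 * (k * n * d) ≤ n ^ k := by
  obtain ⟨j, rfl⟩ : ∃ j, k = j + 1 + 1 := ⟨k - 2, by omega⟩
  set t := d ^ ((1 : ℝ) / ((j + 1 + 1 : ℕ) - 1 : ℝ)) with ht_def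
  have ht : t ^ (j + 1) = d := by
    have : (1 : ℝ) / ((j + 1 + 1 : ℕ) - 1 : ℝ) = ((j + 1 : ℕ) : ℝ)⁻¹ := by push_cast; ring
    rw [ht_def, this]
    exact Real.rpow_inv_natCast_pow hd (by omega)
  have hke : 1 ≤ ((j + 1 + 1 : ℕ) : ℝ) * Real.exp 1 := by
    have := Real.add_one_le_exp 1
    push_cast
    nlinarith
  have hn0 : 0 ≤ n := le_trans (by positivity) hn
  calc Real.exp 1 * ((j + 1 + 1 : ℕ) * n * d)
      = ((j + 1 + 1 : ℕ) * Real.exp 1) * d * n := by ring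
    _ ≤ ((j + 1 + 1 : ℕ) * Real.exp 1) ^ (j + 1) * d * n := by
        gcongr
        exact le_self_pow₀ hke (by omega)
    _ = ((j + 1 + 1 : ℕ) * Real.exp 1 * t) ^ (j + 1) * n := by rw [mul_pow _ t, ht]
    _ ≤ n ^ (j + 1) * n := by gcongr
    _ = n ^ (j + 1 + 1) := (pow_succ _ _).symm

section LovaszLocalLemma

variable {α ι : Type*} [DecidableEq α]

/-- The Local Lemma is stated in counting form: `U` is a uniform probability space and this is the
event that no `B j` with `j ∈ S` occurs. Its hypothesis bounds the conditional probability of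
`B j` given this event, with the denominator cleared. -/
def avoiding (U : Finset α) (B : ι → Finset α) (S : Finset ι) : Finset α := U \ S.biUnion B

lemma avoiding_anti (U : Finset α) (B : ι → Finset α) {S T : Finset ι} (h : S ⊆ T) :
    avoiding U B T ⊆ avoiding U B S :=
  sdiff_subset_sdiff subset_rfl (biUnion_subset_biUnion_of_subset_left B h)

variable [DecidableEq ι]

lemma card_avoiding_insert_add_card_inter (U : Finset α) (B : ι → Finset α) (j : ι)
    (S : Finset ι) :
    #(avoiding U B (insert j S)) + #(B j ∩ avoiding U B S) = #(avoiding U B S) := by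
  rw [avoiding, avoiding, biUnion_insert, union_comm, sdiff_union_distrib,
    ← Finset.sdiff_sdiff_left', inter_comm]
  exact card_sdiff_add_card_inter _ _

lemma mul_card_avoiding_le_card_avoiding_insert {U : Finset α} {B : ι → Finset α} {x : ℝ}
    {j : ι} {S : Finset ι} (h : (#(B j ∩ avoiding U B S) : ℝ) ≤ x * #(avoiding U B S)) :
    (1 - x) * #(avoiding U B S) ≤ #(avoiding U B (insert j S)) := by
  have := card_avoiding_insert_add_card_inter U B j S
  rw [← Nat.cast_inj (R := ℝ), Nat.cast_add] at this
  linarith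

lemma pow_card_mul_le_of_forall_insert {N : Finset ι → ℝ} {c : ℝ} (hc : 0 ≤ c)
    (R T : Finset ι) (h : ∀ j ∈ T, ∀ T' ⊆ T, j ∉ T' → c * N (R ∪ T') ≤ N (R ∪ insert j T')) :
    c ^ #T * N R ≤ N (R ∪ T) := by
  induction T using Finset.induction_on with
  | empty => simp
  | insert j T hjT ih =>
    have hT := ih fun i hi T' hT' hiT' =>
      h i (mem_insert_of_mem hi) T' (hT'.trans (subset_insert _ _)) hiT'
    calc c ^ #(insert j T) * N R = c * (c ^ #T * N R) := by
          rw [card_insert_of_notMem hjT, pow_succ']; ring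
      _ ≤ c * N (R ∪ T) := mul_le_mul_of_nonneg_left hT hc
      _ ≤ N (R ∪ insert j T) := h j (mem_insert_self _ _) T (subset_insert _ _) hjT

theorem card_inter_avoiding_le_mul_card_avoiding {U : Finset α} {J : Finset ι}
    {B : ι → Finset α} {Dep : ι → ι → Prop} [DecidableRel Dep] {x : ℝ} {D : ℕ}
    (hx0 : 0 ≤ x) (hx1 : x ≤ 1) (hdeg : ∀ j ∈ J, #{j' ∈ J | j' ≠ j ∧ Dep j j'} ≤ D)
    (hcond : ∀ j ∈ J, ∀ S ⊆ J, (∀ j' ∈ S, ¬ Dep j j') →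
      (#(B j ∩ avoiding U B S) : ℝ) ≤ x * (1 - x) ^ D * #(avoiding U B S))
    (S : Finset ι) (hSJ : S ⊆ J) {j : ι} (hj : j ∈ J) (hjS : j ∉ S) :
    (#(B j ∩ avoiding U B S) : ℝ) ≤ x * #(avoiding U B S) := by
  induction S using Finset.strongInduction generalizing j with
  | H S ih =>
  set S₁ := S.filter (Dep j)
  set S₂ := S.filter (¬ Dep j ·)
  have hS₂ : S₂ ⊆ S := filter_subset _ _
  have hS₁D : #S₁ ≤ D := by
    refine (card_le_card fun j' hj' => ?_).trans (hdeg j hj)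
    obtain ⟨hj'S, hdep⟩ := mem_filter.1 hj'
    exact mem_filter.2 ⟨hSJ hj'S, fun h => hjS (h ▸ hj'S), hdep⟩
  -- Adding the events of `S₁` back one at a time, each step is an instance of the
  -- induction hypothesis for a proper subset of `S`.
  have hpeel : (1 - x) ^ #S₁ * #(avoiding U B S₂) ≤ (#(avoiding U B S) : ℝ) := by
    have := pow_card_mul_le_of_forall_insert (N := fun S => (#(avoiding U B S) : ℝ))
      (sub_nonneg.2 hx1) S₂ S₁ fun j' hj' T hT hj'T => ?_
    · rwa [union_comm, filter_union_filter_not_eq] at this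
    obtain ⟨hj'S, hdep⟩ := mem_filter.1 hj'
    have hj'S₂T : j' ∉ S₂ ∪ T := by simp [S₂, hdep, hj'T]
    have hsub : S₂ ∪ T ⊂ S :=
      (ssubset_iff_of_subset (union_subset hS₂ (hT.trans (filter_subset _ _)))).2
        ⟨j', hj'S, hj'S₂T⟩
    rw [union_insert]
    exact mul_card_avoiding_le_card_avoiding_insert
      (ih _ hsub (hsub.subset.trans hSJ) (hSJ hj'S) hj'S₂T)
  calc (#(B j ∩ avoiding U B S) : ℝ) ≤ #(B j ∩ avoiding U B S₂) := by
        gcongr; exact avoiding_anti U B hS₂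
    _ ≤ x * (1 - x) ^ D * #(avoiding U B S₂) :=
        hcond j hj S₂ (hS₂.trans hSJ) fun j' hj' => (mem_filter.1 hj').2
    _ ≤ x * ((1 - x) ^ #S₁ * #(avoiding U B S₂)) := by
        rw [← mul_assoc]
        have hpow := pow_le_pow_of_le_one (sub_nonneg.2 hx1) (sub_le_self 1 hx0) hS₁D
        exact mul_le_mul_of_nonneg_right (mul_le_mul_of_nonneg_left hpow hx0) (Nat.cast_nonneg _)
    _ ≤ x * #(avoiding U B S) := by gcongr

theorem pow_card_mul_card_le_card_avoiding {U : Finset α} {J : Finset ι}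
    {B : ι → Finset α} {Dep : ι → ι → Prop} [DecidableRel Dep] {x : ℝ} {D : ℕ}
    (hx0 : 0 ≤ x) (hx1 : x ≤ 1) (hdeg : ∀ j ∈ J, #{j' ∈ J | j' ≠ j ∧ Dep j j'} ≤ D)
    (hcond : ∀ j ∈ J, ∀ S ⊆ J, (∀ j' ∈ S, ¬ Dep j j') →
      (#(B j ∩ avoiding U B S) : ℝ) ≤ x * (1 - x) ^ D * #(avoiding U B S)) :
    (1 - x) ^ #J * #U ≤ (#(avoiding U B J) : ℝ) := by
  have := pow_card_mul_le_of_forall_insert (N := fun S => (#(avoiding U B S) : ℝ))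
    (sub_nonneg.2 hx1) ∅ J fun j hj T hT hjT => ?_
  · simpa [avoiding] using this
  simp only [empty_union]
  exact mul_card_avoiding_le_card_avoiding_insert
    (card_inter_avoiding_le_mul_card_avoiding hx0 hx1 hdeg hcond T hT hj hjT)

theorem exists_mem_forall_notMem_of_symmetric_lll {U : Finset α} {J : Finset ι}
    {B : ι → Finset α} {Dep : ι → ι → Prop} [DecidableRel Dep] {p : ℝ} {D : ℕ}
    (hU : U.Nonempty) (hp : Real.exp 1 * p * (D + 1) ≤ 1)
    (hdeg : ∀ j ∈ J, #{j' ∈ J | j' ≠ j ∧ Dep j j'} ≤ D)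
    (hcond : ∀ j ∈ J, ∀ S ⊆ J, (∀ j' ∈ S, ¬ Dep j j') →
      (#(B j ∩ avoiding U B S) : ℝ) ≤ p * #(avoiding U B S)) :
    ∃ a ∈ U, ∀ j ∈ J, a ∉ B j := by
  -- `1 / (D + 2)` rather than the usual `1 / (D + 1)`, so that `x < 1` also when `D = 0`.
  set x : ℝ := (D + 2)⁻¹
  have hx0 : 0 ≤ x := by positivity
  have hx1 : x < 1 := inv_lt_one_of_one_lt₀ (by linarith [D.cast_nonneg (α := ℝ)])
  have hpx : p ≤ x * (1 - x) ^ D := by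
    refine le_trans ?_ (inv_exp_mul_le D)
    rw [← one_div, le_div_iff₀ (by positivity)]
    linarith
  have hpos := pow_card_mul_card_le_card_avoiding hx0 hx1.le hdeg
    fun j hj S hS hind => (hcond j hj S hS hind).trans (by gcongr)
  obtain ⟨a, ha⟩ : (avoiding U B J).Nonempty := by
    rw [← card_pos, ← Nat.cast_pos (α := ℝ)]
    have := hU.card_pos
    exact lt_of_lt_of_le (by have := sub_pos.2 hx1; positivity) hpos
  simp only [avoiding, mem_sdiff, mem_biUnion, not_exists, not_and] at ha
  exact ⟨a, ha.1, ha.2⟩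

end LovaszLocalLemma

section ProductSpace

variable {ι : Type*} [Fintype ι] [DecidableEq ι] {δ : ι → Type*}

theorem card_filter_and_mul_card_piFinset (A : ∀ i, Finset (δ i)) {P Q : (∀ i, δ i) → Prop}
    [DecidablePred P] [DecidablePred Q] {s t : Finset ι} (hst : Disjoint s t)
    (hP : DependsOn P s) (hQ : DependsOn Q t) :
    #{f ∈ piFinset A | P f ∧ Q f} * #(piFinset A) =
      #{f ∈ piFinset A | P f} * #{f ∈ piFinset A | Q f} := by
  rw [← card_product, ← card_product]
  -- Swapping the `s`-coordinates of a pair is an involution exchanging the two products.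
  let σ (fg : (∀ i, δ i) × (∀ i, δ i)) := (s.piecewise fg.1 fg.2, s.piecewise fg.2 fg.1)
  have hσσ : ∀ fg, σ (σ fg) = fg := fun fg => by simp [σ, piecewise_same]
  have hP' (f g : ∀ i, δ i) : P (s.piecewise f g) ↔ P f :=
    (hP fun i hi => piecewise_eq_of_mem _ _ _ hi).to_iff
  have hQ' (f g : ∀ i, δ i) : Q (s.piecewise f g) ↔ Q g :=
    (hQ fun i hi => piecewise_eq_of_notMem _ _ _ (disjoint_right.1 hst hi)).to_iff
  have hmem {f g : ∀ i, δ i} (hf : f ∈ piFinset A) (hg : g ∈ piFinset A) :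
      s.piecewise f g ∈ piFinset A :=
    mem_piFinset.2 fun i => by
      by_cases hi : i ∈ s <;> simp [hi, mem_piFinset.1 hf i, mem_piFinset.1 hg i]
  refine card_nbij' σ σ ?_ ?_ (fun fg _ => hσσ fg) (fun fg _ => hσσ fg)
  · rintro ⟨f, g⟩ h
    simp only [mem_coe, mem_product, mem_filter] at h ⊢
    exact ⟨⟨hmem h.1.1 h.2, (hP' f g).2 h.1.2.1⟩, hmem h.2 h.1.1, (hQ' g f).2 h.1.2.2⟩
  · rintro ⟨f, g⟩ h
    simp only [mem_coe, mem_product, mem_filter] at h ⊢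
    exact ⟨⟨hmem h.1.1 h.2.1, (hP' f g).2 h.1.2, (hQ' f g).2 h.2.2⟩, hmem h.2.1 h.1.1⟩

theorem card_filter_eqOn_mul_prod_le [∀ i, DecidableEq (δ i)] (A : ∀ i, Finset (δ i))
    (g : ∀ i, δ i) (T : Finset ι) :
    #{f ∈ piFinset A | ∀ i ∈ T, f i = g i} * ∏ i ∈ T, #(A i) ≤ #(piFinset A) := by
  have hsub : {f ∈ piFinset A | ∀ i ∈ T, f i = g i} ⊆
      piFinset fun i => if i ∈ T then {g i} else A i := by
    intro f hf
    obtain ⟨hfA, hfg⟩ := mem_filter.1 hf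
    refine mem_piFinset.2 fun i => ?_
    split_ifs with hi
    exacts [mem_singleton.2 (hfg i hi), mem_piFinset.1 hfA i]
  calc _ ≤ #(piFinset fun i => if i ∈ T then {g i} else A i) * ∏ i ∈ T, #(A i) := by
        gcongr
    _ = (∏ i ∈ Tᶜ, #(A i)) * ∏ i ∈ T, #(A i) := by
        rw [card_piFinset]
        simp [apply_ite, prod_ite, compl_eq_univ_sdiff, filter_not]
    _ = #(piFinset A) := by rw [mul_comm, prod_mul_prod_compl, card_piFinset]

end ProductSpace

lemma dependsOn_subset_image {ι V : Type*} [DecidableEq V] (e : Finset V) (s : Finset ι) :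
    DependsOn (fun f : ι → V => e ⊆ s.image f) s :=
  fun _ _ h => congrArg (e ⊆ ·) (image_congr h)

section Rainbow

variable {ι V : Type*} [Fintype ι] [DecidableEq V]

def touchedParts (A : ι → Finset V) (e : Finset V) : Finset ι := {i | ¬ Disjoint e (A i)}

lemma card_touchedParts_le {A : ι → Finset V} (hA : Pairwise (Disjoint on A)) (e : Finset V) :
    #(touchedParts A e) ≤ #e := by
  refine (card_le_card_biUnion (f := fun i => e ∩ A i) ?_ fun i hi => ?_).trans
    (card_le_card (biUnion_subset.2 fun i _ => inter_subset_left))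
  · exact fun i _ j _ hij => (hA hij).mono inter_subset_right inter_subset_right
  · exact not_disjoint_iff_nonempty_inter.1 (mem_filter.1 hi).2

variable [DecidableEq ι]

/-- A point `f` of `piFinset A` is a choice of one vertex from each part; the bad event of `e` is
that all of `e` is chosen. Writing it with the image of the touched parts only (equivalent on
`piFinset A` when the parts are disjoint) makes it depend on those coordinates alone. -/
def coverEvent (A : ι → Finset V) (e : Finset V) : Finset (ι → V) :=
  {f ∈ piFinset A | e ⊆ (touchedParts A e).image f}

lemma apply_eq_of_mem_image {A : ι → Finset V} (hA : Pairwise (Disjoint on A)) {f : ι → V}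
    (hf : f ∈ piFinset A) {s : Finset ι} {i : ι} {w : V} (hwi : w ∈ A i)
    (hw : w ∈ s.image f) : f i = w := by
  obtain ⟨i', -, rfl⟩ := mem_image.1 hw
  rw [hA.eq (not_disjoint_iff.2 ⟨f i', mem_piFinset.1 hf i', hwi⟩)]

lemma mem_coverEvent_of_subset_image {A : ι → Finset V} {f : ι → V} (hf : f ∈ piFinset A)
    {e : Finset V} (he : e ⊆ univ.image f) : f ∈ coverEvent A e := by
  refine mem_filter.2 ⟨hf, fun w hw => ?_⟩
  obtain ⟨i, -, rfl⟩ := mem_image.1 (he hw)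
  exact mem_image_of_mem f
    (mem_filter.2 ⟨mem_univ _, not_disjoint_iff.2 ⟨f i, hw, mem_piFinset.1 hf i⟩⟩)

theorem card_coverEvent_mul_pow_le {A : ι → Finset V} (hA : Pairwise (Disjoint on A))
    {n : ℕ} (hn : ∀ i, n ≤ #(A i)) (e : Finset V) :
    #(coverEvent A e) * n ^ #e ≤ #(piFinset A) := by
  obtain he | ⟨f₀, hf₀⟩ := (coverEvent A e).eq_empty_or_nonempty
  · simp [he]
  obtain ⟨hf₀A, hf₀e⟩ := mem_filter.1 hf₀
  set T := touchedParts A e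
  have hT : #T = #e :=
    le_antisymm (card_touchedParts_le hA e) ((card_le_card hf₀e).trans card_image_le)
  have hsub : coverEvent A e ⊆ {f ∈ piFinset A | ∀ i ∈ T, f i = f₀ i} := by
    intro f hf
    obtain ⟨hfA, hfe⟩ := mem_filter.1 hf
    refine mem_filter.2 ⟨hfA, fun i hi => ?_⟩
    obtain ⟨w, hwe, hwi⟩ := not_disjoint_iff.1 (mem_filter.1 hi).2
    rw [apply_eq_of_mem_image hA hfA hwi (hfe hwe), apply_eq_of_mem_image hA hf₀A hwi (hf₀e hwe)]
  calc #(coverEvent A e) * n ^ #e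
      ≤ #{f ∈ piFinset A | ∀ i ∈ T, f i = f₀ i} * ∏ i ∈ T, #(A i) := by
        rw [← hT]
        exact Nat.mul_le_mul (card_le_card hsub) (pow_card_le_prod T _ n fun i _ => hn i)
    _ ≤ #(piFinset A) := card_filter_eqOn_mul_prod_le A f₀ T

lemma avoiding_coverEvent (A : ι → Finset V) (S : Finset (Finset V)) :
    avoiding (piFinset A) (coverEvent A) S =
      {f ∈ piFinset A | ∀ e ∈ S, ¬ e ⊆ (touchedParts A e).image f} := by
  ext f
  simp only [avoiding, coverEvent, mem_sdiff, mem_biUnion, mem_filter]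
  grind

theorem card_coverEvent_inter_avoiding_mul (A : ι → Finset V) {e : Finset V}
    {S : Finset (Finset V)} (hS : ∀ e' ∈ S, Disjoint (touchedParts A e) (touchedParts A e')) :
    #(coverEvent A e ∩ avoiding (piFinset A) (coverEvent A) S) * #(piFinset A) =
      #(coverEvent A e) * #(avoiding (piFinset A) (coverEvent A) S) := by
  rw [avoiding_coverEvent, coverEvent, ← filter_and]
  refine card_filter_and_mul_card_piFinset A ((disjoint_biUnion_right _ _ _).2 hS)
    (dependsOn_subset_image e _) fun f g h => propext (forall₂_congr fun e' he' => not_congr ?_)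
  exact (dependsOn_subset_image e' _ fun i hi => h i (mem_biUnion.2 ⟨e', he', hi⟩)).to_iff

theorem card_coverEvent_inter_avoiding_mul_pow_le {A : ι → Finset V}
    (hA : Pairwise (Disjoint on A)) {n : ℕ} (hn : ∀ i, n ≤ #(A i)) {e : Finset V}
    {S : Finset (Finset V)} (hS : ∀ e' ∈ S, Disjoint (touchedParts A e) (touchedParts A e')) :
    #(coverEvent A e ∩ avoiding (piFinset A) (coverEvent A) S) * n ^ #e ≤
      #(avoiding (piFinset A) (coverEvent A) S) := by
  obtain hU | hU := (piFinset A).eq_empty_or_nonempty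
  · simp [coverEvent, hU]
  refine Nat.le_of_mul_le_mul_right ?_ hU.card_pos
  calc _ = #(coverEvent A e) * n ^ #e * #(avoiding (piFinset A) (coverEvent A) S) := by
        rw [mul_right_comm, card_coverEvent_inter_avoiding_mul A hS, mul_right_comm]
    _ ≤ #(piFinset A) * #(avoiding (piFinset A) (coverEvent A) S) :=
        Nat.mul_le_mul_right _ (card_coverEvent_mul_pow_le hA hn e)
    _ = _ := mul_comm _ _

lemma card_filter_not_disjoint_le (H : Finset (Finset V)) {d : ℕ}
    (hdeg : ∀ v, #{e ∈ H | v ∈ e} ≤ d) (W : Finset V) :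
    #{e ∈ H | ¬ Disjoint W e} ≤ #W * d := by
  refine (card_le_card fun e he => ?_).trans
    (card_biUnion_le_card_mul W (fun w => {e ∈ H | w ∈ e}) d fun w _ => hdeg w)
  obtain ⟨heH, hWe⟩ := mem_filter.1 he
  obtain ⟨w, hwW, hwe⟩ := not_disjoint_iff.1 hWe
  exact mem_biUnion.2 ⟨w, hwW, mem_filter.2 ⟨heH, hwe⟩⟩

theorem card_filter_ne_not_disjoint_touchedParts_le {A : ι → Finset V}
    (hA : Pairwise (Disjoint on A)) {n d : ℕ} (hn : ∀ i, #(A i) ≤ n) {H : Finset (Finset V)}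
    (hdeg : ∀ v, #{e ∈ H | v ∈ e} ≤ d) {e : Finset V} (he : e ∈ H) :
    #{e' ∈ H | e' ≠ e ∧ ¬ Disjoint (touchedParts A e) (touchedParts A e')} ≤
      #e * n * d - 1 := by
  set W := (touchedParts A e).biUnion A
  set N := {e' ∈ H | ¬ Disjoint W e'}
  have hW : #W ≤ #e * n := (card_biUnion_le_card_mul _ _ n fun i _ => hn i).trans
    (Nat.mul_le_mul_right n (card_touchedParts_le hA e))
  -- any dependent edge witnesses that `e` itself meets `W`, so it can be discounted from `N`
  have key : ∀ e' ∈ {e' ∈ H | e' ≠ e ∧ ¬ Disjoint (touchedParts A e) (touchedParts A e')},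
      e' ∈ N.erase e ∧ e ∈ N := by
    intro e' he'
    obtain ⟨he'H, hne, hdep⟩ := mem_filter.1 he'
    obtain ⟨i, hi, hi'⟩ := not_disjoint_iff.1 hdep
    have hAW : A i ⊆ W := subset_biUnion_of_mem A hi
    obtain ⟨w, hwe, hwi⟩ := not_disjoint_iff.1 (mem_filter.1 hi).2
    obtain ⟨w', hwe', hwi'⟩ := not_disjoint_iff.1 (mem_filter.1 hi').2
    exact ⟨mem_erase.2 ⟨hne, mem_filter.2 ⟨he'H, not_disjoint_iff.2 ⟨w', hAW hwi', hwe'⟩⟩⟩,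
      mem_filter.2 ⟨he, not_disjoint_iff.2 ⟨w, hAW hwi, hwe⟩⟩⟩
  obtain hempty | ⟨e', he'⟩ := Finset.eq_empty_or_nonempty
    {e' ∈ H | e' ≠ e ∧ ¬ Disjoint (touchedParts A e) (touchedParts A e')}
  · simp [hempty]
  calc _ ≤ #(N.erase e) := card_le_card fun e' he' => (key e' he').1
    _ = #N - 1 := card_erase_of_mem (key e' he').2
    _ ≤ #e * n * d - 1 := Nat.sub_le_sub_right
        ((card_filter_not_disjoint_le H hdeg W).trans (Nat.mul_le_mul_right d hW)) 1

theorem exists_rainbow_independent {A : ι → Finset V} (hA : Pairwise (Disjoint on A))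
    {k n d : ℕ} (hAn : ∀ i, #(A i) = n) (hk : 0 < k) (hn : 0 < n) (hd : 0 < d)
    {H : Finset (Finset V)} (huniform : ∀ e ∈ H, #e = k) (hdeg : ∀ v, #{e ∈ H | v ∈ e} ≤ d)
    (hkey : Real.exp 1 * (k * n * d) ≤ (n : ℝ) ^ k) :
    ∃ v : ι → V, (∀ i, v i ∈ A i) ∧ ∀ e ∈ H, ¬ e ⊆ univ.image v := by
  have hU : (piFinset A).Nonempty := piFinset_nonempty.2 fun i => card_pos.1 (hAn i ▸ hn)
  have hnk : (0 : ℝ) < n ^ k := by positivity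
  have hD : ((k * n * d - 1 : ℕ) : ℝ) + 1 = k * n * d := by
    rw [Nat.cast_sub (Nat.mul_pos (Nat.mul_pos hk hn) hd)]
    push_cast
    ring
  have hcond : ∀ e ∈ H, ∀ S ⊆ H,
      (∀ e' ∈ S, ¬ ¬ Disjoint (touchedParts A e) (touchedParts A e')) →
      (#(coverEvent A e ∩ avoiding (piFinset A) (coverEvent A) S) : ℝ) ≤
        ((n : ℝ) ^ k)⁻¹ * #(avoiding (piFinset A) (coverEvent A) S) := by
    intro e he S _ hS
    have := card_coverEvent_inter_avoiding_mul_pow_le hA (fun i => (hAn i).ge)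
      fun e' he' => not_not.1 (hS e' he')
    rw [huniform e he] at this
    rw [le_inv_mul_iff₀ hnk, mul_comm]
    exact_mod_cast this
  obtain ⟨v, hvA, hv⟩ := exists_mem_forall_notMem_of_symmetric_lll (D := k * n * d - 1) hU
    (by rw [hD, mul_right_comm, ← div_eq_mul_inv, div_le_one hnk]; exact hkey)
    (fun e he => huniform e he ▸
      card_filter_ne_not_disjoint_touchedParts_le hA (fun i => (hAn i).le) hdeg he)
    hcond
  exact ⟨v, mem_piFinset.1 hvA, fun e he hsub => hv e he (mem_coverEvent_of_subset_image hvA hsub)⟩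

end Rainbow

/-- Rainbow independent sets in hypergraphs via the Lovász Local Lemma: if `H`
is `k`-uniform with maximum degree at most `d`, then any family of pairwise
disjoint vertex sets, each of size at least `⌈k·e·d^(1/(k-1))⌉`, has a full
rainbow independent set. -/
theorem rainbow_independent_hypergraph {V : Type*} [DecidableEq V]
    {k d m : ℕ} (hk : 2 ≤ k) (hd : 1 ≤ d)
    (H : Finset (Finset V))
    (huniform : ∀ e ∈ H, e.card = k)
    (hdeg : ∀ v : V, (H.filter (fun e => v ∈ e)).card ≤ d)
    (A : Fin m → Finset V)
    (hdisj : ∀ i j, i ≠ j → Disjoint (A i) (A j))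
    (hsize : ∀ i, ⌈(k : ℝ) * Real.exp 1 * (d : ℝ) ^ ((1 : ℝ) / (k - 1 : ℝ))⌉₊
      ≤ (A i).card) :
    ∃ v : Fin m → V, (∀ i, v i ∈ A i) ∧
      ∀ e ∈ H, ¬ e ⊆ Finset.univ.image v := by
  set n := ⌈(k : ℝ) * Real.exp 1 * (d : ℝ) ^ ((1 : ℝ) / (k - 1 : ℝ))⌉₊
  have hn : 0 < n := by
    have : (0 : ℝ) < k := by exact_mod_cast (by omega : 0 < k)
    have : (0 : ℝ) < d := by exact_mod_cast hd
    exact Nat.ceil_pos.2 (by positivity)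
  choose B hBA hBn using fun i => exists_subset_card_eq (hsize i)
  obtain ⟨v, hvB, hv⟩ := exists_rainbow_independent
    (fun i j hij => (hdisj i j hij).mono (hBA i) (hBA j)) hBn (by omega) hn hd huniform hdeg
    (exp_one_mul_le_pow hk d.cast_nonneg (Nat.le_ceil _))
  exact ⟨v, fun i => hBA i (hvB i), hv⟩
end
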